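/- arXiv:1110.3177 — 10 statements merged into one kernel-verified Lean document; each statement's English description precedes it below -/
import Mathlib

section
/- Let n = 2k and s be a positive integer with gcd(s, 2k) = 1. Let b be an element of F_{2^{2k}} that is not a cube (in particular b ≠ 0, 1), and set a = b(b+1)^{2^s + 2^{-s}} / (b + b^{2^{-s}})^{2^s+1}, where exponents 2^{-s} denote the inverse Frobenius (i.e., x^{2^{-s}} is the unique y with y^{2^s} = x). Then the polynomial P_a(x) = x^{2^s+1} + x + a has no roots in F_{2^{2k}}. -/
/-!
Write `σ` for the Frobenius power `x ↦ x ^ 2 ^ s`, so that `σ b' = b` and a root of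
`x ^ (2 ^ s + 1) + x + a` is a solution of `σ x * x + x + a = 0`. For such a root the Möbius
transform `t = ((b + b') x + b (b' + 1)) / ((b + b') x + (b' + 1))` satisfies `t * σ t = b`,
i.e. `t ^ (2 ^ s + 1) = b`. Since `gcd (s, 2k) = 1` forces `s` odd, `3 ∣ 2 ^ s + 1` and `b` would
be a cube. The nondegeneracy `b ≠ b'` holds because the only fixed points of `σ` are `0` and `1`,
the Frobenius periods `s` and `2k` of an element combining to the period `gcd (s, 2k) = 1`.
-/

open Function

theorem FiniteField.pow_char_eq_self_of_pow_char_pow_eq_self {F : Type*} [Field F] [Fintype F]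
    {p n s : ℕ} [Fact p.Prime] [CharP F p] (hcard : Fintype.card F = p ^ n) (hsn : s.Coprime n)
    {u : F} (hu : u ^ p ^ s = u) : u ^ p = u := by
  have hs : IsPeriodicPt (frobenius F p) s u := by
    rw [IsPeriodicPt, IsFixedPt, iterate_frobenius, hu]
  have hn : IsPeriodicPt (frobenius F p) n u := by
    rw [IsPeriodicPt, IsFixedPt, iterate_frobenius, ← hcard, FiniteField.pow_card]
  simpa [IsPeriodicPt, IsFixedPt, hsn.gcd_eq_one, frobenius_def] using hs.gcd hn

theorem FiniteField.eq_zero_or_one_of_pow_two_pow_eq_self {F : Type*} [Field F] [Fintype F]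
    {n s : ℕ} (hcard : Fintype.card F = 2 ^ n) (hsn : s.Coprime n) {u : F}
    (hu : u ^ 2 ^ s = u) : u = 0 ∨ u = 1 := by
  have := charP_of_card_eq_prime_pow hcard
  refine IsIdempotentElem.iff_eq_zero_or_one.mp ?_
  rw [IsIdempotentElem, ← sq]
  exact pow_char_eq_self_of_pow_char_pow_eq_self hcard hsn hu

theorem Nat.three_dvd_two_pow_add_one {s : ℕ} (hs : Odd s) : 3 ∣ 2 ^ s + 1 := by
  simpa using hs.nat_add_dvd_pow_add_pow 2 1

theorem CharTwo.exists_mul_map_eq_of_map_mul_add_add_eq_zero {F : Type*} [Field F] [CharP F 2]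
    (σ : F →+* F) {a b c x : F} (hc : σ c = b) (hb1 : b ≠ 1) (hd : b + c ≠ 0)
    (ha : a = b * (σ (b + 1) * (c + 1)) / (σ (b + c) * (b + c))) (hx : σ x * x + x + a = 0) :
    ∃ t, t * σ t = b := by
  have htwo : (2 : F) = 0 := CharTwo.two_eq_zero
  have hb1_ne : b + 1 ≠ 0 := fun h => hb1 (CharTwo.add_eq_zero.mp h)
  have hc1_ne : c + 1 ≠ 0 := fun h => hb1 (by rw [← hc, CharTwo.add_eq_zero.mp h, map_one])
  have hσd : σ (b + c) = σ b + b := by rw [map_add, hc]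
  have hσb1 : σ (b + 1) = σ b + 1 := by rw [map_add, map_one]
  have hσd_ne : σ b + b ≠ 0 := hσd ▸ (map_ne_zero σ).mpr hd
  have hσb1_ne : σ b + 1 ≠ 0 := hσb1 ▸ (map_ne_zero σ).mpr hb1_ne
  rw [hσd, hσb1] at ha
  have hA : a * ((σ b + b) * (b + c)) = b * ((σ b + 1) * (c + 1)) := by
    rw [ha, div_mul_cancel₀ _ (mul_ne_zero hσd_ne hd)]
  have hfd : σ ((b + c) * x + (c + 1)) = (σ b + b) * σ x + (b + 1) := by simp [hc]
  have hfn : σ ((b + c) * x + b * (c + 1)) = (σ b + b) * σ x + σ b * (b + 1) := by simp [hc]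
  have hden1 : (b + c) * x + (c + 1) ≠ 0 := by
    intro h1
    have h2 : (σ b + b) * σ x + (b + 1) = 0 := by rw [← hfd, h1, map_zero]
    have hzero : (c + 1) * ((b + 1) * (σ b + 1)) = 0 := by
      linear_combination ((b + c) * (σ b + b)) * hx - ((b + c) * x) * h2 - hA
        + (1 - σ b) * h1 + (σ b * (1 + c)) * htwo
    exact (mul_ne_zero hc1_ne (mul_ne_zero hb1_ne hσb1_ne)) hzero
  have hden2 : (σ b + b) * σ x + (b + 1) ≠ 0 := by rw [← hfd]; exact (map_ne_zero σ).mpr hden1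
  refine ⟨((b + c) * x + b * (c + 1)) / ((b + c) * x + (c + 1)), ?_⟩
  rw [map_div₀, hfn, hfd, div_mul_div_comm, div_eq_iff (mul_ne_zero hden1 hden2)]
  linear_combination (c * σ b + b * σ b + b * c - b * c * σ b + b ^ 2 - b ^ 2 * σ b
        - b ^ 2 * c - b ^ 3) * hx + (b - 1) * hA
      + (-b - b * c + b ^ 2 * σ b + b ^ 2 * c * σ b - x * b * c + x * b * c * σ b
        - x * b ^ 2 + x * b ^ 2 * σ b) * htwo

theorem stmt0_general (F : Type*) [Field F] [Fintype F] (k s : ℕ)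
    (hcard : Fintype.card F = 2 ^ (2 * k)) (hgcd : Nat.gcd s (2 * k) = 1)
    (b : F) (hb : ¬ ∃ c : F, c ^ 3 = b)
    (b' : F) (hb' : b' ^ 2 ^ s = b)
    (a : F)
    (ha : a = b * ((b + 1) ^ 2 ^ s * (b' + 1)) / (b + b') ^ (2 ^ s + 1)) :
    ∀ x : F, x ^ (2 ^ s + 1) + x + a ≠ 0 := by
  intro x hx
  have := charP_of_card_eq_prime_pow hcard
  have hb0 : b ≠ 0 := fun h => hb ⟨0, by simp [h]⟩
  have hb1 : b ≠ 1 := fun h => hb ⟨1, by simp [h]⟩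
  have hd : b + b' ≠ 0 := by
    rw [Ne, CharTwo.add_eq_zero]
    rintro rfl
    exact (FiniteField.eq_zero_or_one_of_pow_two_pow_eq_self hcard hgcd hb').elim hb0 hb1
  -- `iterateFrobenius F 2 s u` unfolds to `u ^ 2 ^ s`, so `ha` and `hx` now fit the lemma.
  rw [pow_succ] at ha hx
  obtain ⟨t, ht⟩ := CharTwo.exists_mul_map_eq_of_map_mul_add_add_eq_zero (iterateFrobenius F 2 s)
    hb' hb1 hd ha hx
  obtain ⟨e, he⟩ := Nat.three_dvd_two_pow_add_one
    (Nat.Coprime.odd_of_right (Nat.Coprime.coprime_dvd_right (dvd_mul_right 2 k) hgcd))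
  exact hb ⟨t ^ e, by rw [← pow_mul, mul_comm, ← he, pow_succ', ← ht]; rfl⟩

/-- If `b` is a non-cube in `F_{2^{2k}}`, `gcd(s,2k)=1`, and
`a = b(b+1)^{2^s+2^{-s}} / (b+b^{2^{-s}})^{2^s+1}` (where `b'` denotes `b^{2^{-s}}`,
the unique `y` with `y^{2^s} = b`), then `x^{2^s+1} + x + a` has no roots. -/
theorem stmt0 (F : Type*) [Field F] [Fintype F] (k s : ℕ) (hk : 0 < k) (hs : 0 < s)
    (hcard : Fintype.card F = 2 ^ (2 * k)) (hgcd : Nat.gcd s (2 * k) = 1)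
    (b : F) (hb : ¬ ∃ c : F, c ^ 3 = b)
    (b' : F) (hb' : b' ^ 2 ^ s = b)
    (a : F)
    (ha : a = b * ((b + 1) ^ 2 ^ s * (b' + 1)) / (b + b') ^ (2 ^ s + 1)) :
    ∀ x : F, x ^ (2 ^ s + 1) + x + a ≠ 0 :=
  stmt0_general F k s hcard hgcd b hb b' hb' a ha
end

section
/- Let k be any positive integer and let d ∈ F_{2^{2k}} be a non-cube. Then the polynomial x^3 + x + (d + d^{-1}) is irreducible over F_{2^{2k}}. -/
open Polynomial

/-- For any non-cube `d` in `F_{2^{2k}}`, the polynomial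
`x^3 + x + (d + d⁻¹)` is irreducible over `F_{2^{2k}}`. -/
theorem stmt4 (F : Type*) [Field F] [Fintype F] (k : ℕ) (hk : 0 < k)
    (hcard : Fintype.card F = 2 ^ (2 * k))
    (d : F) (hd : ¬ ∃ c : F, c ^ 3 = d) :
    Irreducible (X ^ 3 + X + C (d + d⁻¹) : F[X]) := by
  have hd0 : d ≠ 0 := by
    intro h
    refine hd ⟨0, ?_⟩
    simp [h]
  have h2 : (2 : F) = 0 := by
    have := FiniteField.cast_card_eq_zero F
    rw [hcard] at this
    push_cast at this
    have h2k : 2 * k ≠ 0 := by omega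
    exact pow_eq_zero_iff h2k |>.mp this
  have hdeg : (X ^ 3 + X + C (d + d⁻¹) : F[X]).natDegree = 3 := by
    compute_degree!
  rw [irreducible_iff_roots_eq_zero_of_degree_le_three (by omega) (by omega)]
  rw [Multiset.eq_zero_iff_forall_notMem]
  intro r hr
  have hp0 : (X ^ 3 + X + C (d + d⁻¹) : F[X]) ≠ 0 := by
    intro h
    rw [h] at hdeg
    simp at hdeg
  rw [mem_roots hp0] at hr
  have hrel : r ^ 3 + r + (d + d⁻¹) = 0 := by
    simpa [IsRoot] using hr
  have hrel2 : d * r ^ 3 + d * r + d ^ 2 + 1 = 0 := by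
    field_simp at hrel
    linear_combination hrel
  by_cases hr1 : r = 1
  · subst hr1
    have hdd : d ^ 2 = 1 := by linear_combination hrel2 - (d + 1) * h2
    exact hd ⟨d, by linear_combination d * hdd⟩
  · have hne : r + 1 ≠ 0 := by
      intro h
      apply hr1
      linear_combination h - h2
    have hsq : r ^ 2 + 1 ≠ 0 := by
      intro h
      apply hne
      have hsq2 : (r + 1) ^ 2 = 0 := by linear_combination h + r * h2
      exact pow_eq_zero_iff two_ne_zero |>.mp hsq2
    refine hd ⟨(d + r) / (r ^ 2 + 1), ?_⟩
    rw [div_pow, div_eq_iff (pow_ne_zero _ hsq)]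
    linear_combination (r^3 + d) * hrel2 + (d^2*r - d*r^6 - 2*d*r^4 - d - d^2*r^3) * h2
end

section
/- Let k be any positive integer and a ∈ F_{2^{2k}}. The polynomial x^3 + x + a is irreducible over F_{2^{2k}} if and only if a = d + d^{-1} for some non-cube d ∈ F_{2^{2k}}. -/
/-!
In characteristic 2 the substitution `x = t + t⁻¹` turns `x³ + x` into `t³ + t⁻³`, and `x`
determines `t` up to `t ↦ t⁻¹`. Work in an algebraic closure of `F` with the Frobenius
`σ z = z ^ #F`, whose fixed points are exactly `F`; since `#F = 4 ^ k ≡ 1 mod 3`, the cube roots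
of unity are fixed by `σ`.

If `x ∈ F` is a root of `X³ + X + (d + d⁻¹)`, then `t³ ∈ {d, d⁻¹}` and `σ t ∈ {t, t⁻¹}`: either
`t ∈ F` and `d` is a cube, or `t³ = σ (t³) = t⁻³` and `d = 1`.
Conversely, if `y = t + t⁻¹` is a root of the irreducible `X³ + X + a`, then `e = t³` satisfies
`e + e⁻¹ = a` and `σ e ∈ {e, e⁻¹}`. Unless `e ∈ F` is a non-cube, `σ² t = t` (in the first case
`t` is a cube root of unity times an element of `F`, in the second `σ t = ω t⁻¹` with `ω³ = 1`),
so `y` would have degree at most 2 over `F`.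
-/

open Polynomial

theorem add_inv_eq_add_inv_iff {K : Type*} [Field K] {s t : K} (hs : s ≠ 0) (ht : t ≠ 0) :
    s + s⁻¹ = t + t⁻¹ ↔ s = t ∨ s = t⁻¹ := by
  constructor
  · intro h
    have key : (s - t) * (s * t - 1) = 0 := by
      field_simp at h
      linear_combination h
    rcases mul_eq_zero.mp key with h | h
    · exact Or.inl (sub_eq_zero.mp h)
    · exact Or.inr (eq_inv_of_mul_eq_one_left (sub_eq_zero.mp h))
  · rintro (rfl | rfl)
    · rfl
    · rw [inv_inv, add_comm]

theorem map_eq_or_map_eq_inv_of_map_add_inv {K G : Type*} [Field K] [FunLike G K K]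
    [RingHomClass G K K] (σ : G) {t : K} (ht : t ≠ 0) (h : σ (t + t⁻¹) = t + t⁻¹) :
    σ t = t ∨ σ t = t⁻¹ := by
  rw [map_add, map_inv₀] at h
  exact (add_inv_eq_add_inv_iff ((map_ne_zero σ).mpr ht) ht).mp h

theorem IsAlgClosed.exists_add_inv_eq {K : Type*} [Field K] [IsAlgClosed K] (x : K) :
    ∃ t, t ≠ 0 ∧ t + t⁻¹ = x := by
  have hdeg : (X ^ 2 - C x * X + 1 : K[X]).degree = 2 := by compute_degree!
  obtain ⟨t, ht⟩ := IsAlgClosed.exists_root _ (hdeg ▸ two_ne_zero)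
  have ht' : t ^ 2 - x * t + 1 = 0 := by simpa using ht
  have ht0 : t ≠ 0 := by rintro rfl; simp at ht'
  refine ⟨t, ht0, ?_⟩
  field_simp
  linear_combination ht'

theorem CharTwo.add_inv_pow_three_add {K : Type*} [Field K] [CharP K 2] (t : K) :
    (t + t⁻¹) ^ 3 + (t + t⁻¹) = t ^ 3 + (t ^ 3)⁻¹ := by
  rcases eq_or_ne t 0 with rfl | ht
  · simp
  rw [← inv_pow]
  linear_combination (3 * t + 3 * t⁻¹) * mul_inv_cancel₀ ht +
    (2 * t + 2 * t⁻¹) * CharTwo.two_eq_zero (R := K)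

theorem natDegree_X_pow_three_add_X_add_C {R : Type*} [CommRing R] [Nontrivial R] (a : R) :
    (X ^ 3 + X + C a : R[X]).natDegree = 3 := by
  compute_degree!

namespace FiniteField

variable {F : Type*} [Field F] [Fintype F]

section Frobenius

variable {K : Type*} [Field K] [Algebra F K]

theorem exists_algebraMap_eq_of_frobeniusAlgHom_apply_eq {z : K} (hz : frobeniusAlgHom F K z = z) :
    ∃ u, algebraMap F K u = z := by
  have hq := Fintype.one_lt_card (α := F)
  have hroots := roots_map_of_injective_of_card_eq_natDegree (algebraMap F K).injective
    (p := X ^ Fintype.card F - X) (by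
      rw [roots_X_pow_card_sub_X, X_pow_card_sub_X_natDegree_eq F hq]; rfl)
  have hz' : z ∈ ((X ^ Fintype.card F - X : F[X]).map (algebraMap F K)).roots := by
    rw [mem_roots (Polynomial.map_ne_zero (X_pow_card_sub_X_ne_zero F hq))]
    simpa [sub_eq_zero] using hz
  rw [← hroots, roots_X_pow_card_sub_X, Multiset.mem_map] at hz'
  obtain ⟨u, -, hu⟩ := hz'
  exact ⟨u, hu⟩

theorem frobeniusAlgHom_apply_eq_self_of_pow_eq_one {n : ℕ} (hq : Fintype.card F % n = 1) {ω : K}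
    (hω : ω ^ n = 1) : frobeniusAlgHom F K ω = ω :=
  (pow_eq_pow_mod _ hω).trans (by rw [hq, pow_one])

theorem frobeniusAlgHom_apply_eq_self_of_pow_three_eq (hq : Fintype.card F % 3 = 1) {s t : K}
    (hs : frobeniusAlgHom F K s = s) (h : t ^ 3 = s ^ 3) : frobeniusAlgHom F K t = t := by
  rcases eq_or_ne s 0 with rfl | hs0
  · rw [pow_eq_zero_iff three_ne_zero |>.mp (h.trans (zero_pow three_ne_zero)), map_zero]
  have hω : (t / s) ^ 3 = 1 := by rw [div_pow, h, div_self (pow_ne_zero 3 hs0)]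
  have ht : t = t / s * s := (div_mul_cancel₀ t hs0).symm
  rw [ht, map_mul, frobeniusAlgHom_apply_eq_self_of_pow_eq_one hq hω, hs]

theorem frobeniusAlgHom_apply_apply_eq_self_of_apply_pow_three_eq_inv
    (hq : Fintype.card F % 3 = 1) {t : K} (ht : t ≠ 0)
    (h : frobeniusAlgHom F K (t ^ 3) = (t ^ 3)⁻¹) :
    frobeniusAlgHom F K (frobeniusAlgHom F K t) = t := by
  set σ := frobeniusAlgHom F K
  have hω : (σ t * t) ^ 3 = 1 := by
    rw [mul_pow, ← map_pow, h, inv_mul_cancel₀ (pow_ne_zero 3 ht)]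
  have hσt : σ t = σ t * t * t⁻¹ := by rw [mul_assoc, mul_inv_cancel₀ ht, mul_one]
  rw [hσt, map_mul, frobeniusAlgHom_apply_eq_self_of_pow_eq_one hq hω, map_inv₀]
  field_simp [(map_ne_zero σ).mpr ht]

theorem natDegree_minpoly_le_two_of_frobeniusAlgHom_apply_apply_eq {y : K}
    (h : frobeniusAlgHom F K (frobeniusAlgHom F K y) = y) : (minpoly F y).natDegree ≤ 2 := by
  set σ := frobeniusAlgHom F K
  obtain ⟨b, hb⟩ := exists_algebraMap_eq_of_frobeniusAlgHom_apply_eq (z := y + σ y)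
    (by rw [map_add, h, add_comm])
  obtain ⟨c, hc⟩ := exists_algebraMap_eq_of_frobeniusAlgHom_apply_eq (z := y * σ y)
    (by rw [map_mul, h, mul_comm])
  have hmonic : (X ^ 2 - C b * X + C c).Monic := by monicity!
  have hdeg : (X ^ 2 - C b * X + C c).natDegree = 2 := by compute_degree!
  have hroot : aeval y (X ^ 2 - C b * X + C c) = 0 := by
    simp only [map_add, map_sub, map_mul, map_pow, aeval_X, aeval_C, hb, hc]
    ring
  have := minpoly.min F y hmonic hroot
  rw [degree_eq_natDegree (minpoly.ne_zero ⟨_, hmonic, hroot⟩),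
    degree_eq_natDegree hmonic.ne_zero, hdeg] at this
  exact_mod_cast this

end Frobenius

variable [CharP F 2]

theorem irreducible_X_pow_three_add_X_add_C_add_inv {d : F} (hd : ¬∃ c, c ^ 3 = d) :
    Irreducible (X ^ 3 + X + C (d + d⁻¹) : F[X]) := by
  have hp := natDegree_X_pow_three_add_X_add_C (d + d⁻¹)
  rw [irreducible_iff_roots_eq_zero_of_degree_le_three (by omega) (by omega),
    Multiset.eq_zero_iff_forall_notMem]
  intro x hx
  rw [mem_roots (ne_zero_of_natDegree_gt (hp ▸ three_pos)), IsRoot.def] at hx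
  have hx : x ^ 3 + x = d + d⁻¹ := CharTwo.add_eq_zero.mp (by simpa using hx)
  let K := AlgebraicClosure F
  let i := algebraMap F K
  obtain ⟨t, ht0, htx⟩ := IsAlgClosed.exists_add_inv_eq (i x)
  have ht3 : t ^ 3 + (t ^ 3)⁻¹ = i d + (i d)⁻¹ := by
    rw [← CharTwo.add_inv_pow_three_add, htx, ← map_inv₀, ← map_pow, ← map_add, ← map_add,
      hx]
  obtain ⟨e, he, hne⟩ : ∃ e, t ^ 3 = i e ∧ ¬∃ c, c ^ 3 = e := by
    have hd0 : i d ≠ 0 :=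
      (map_ne_zero i).mpr (by rintro rfl; exact hd ⟨0, zero_pow three_ne_zero⟩)
    rcases (add_inv_eq_add_inv_iff (pow_ne_zero 3 ht0) hd0).mp ht3 with h | h
    · exact ⟨d, h, hd⟩
    · refine ⟨d⁻¹, by rw [h, map_inv₀], fun ⟨c, hc⟩ => hd ⟨c⁻¹, ?_⟩⟩
      rw [inv_pow, hc, inv_inv]
  rcases map_eq_or_map_eq_inv_of_map_add_inv (frobeniusAlgHom F K) ht0
    (by rw [htx, AlgHom.commutes]) with h | h
  · obtain ⟨u, rfl⟩ := exists_algebraMap_eq_of_frobeniusAlgHom_apply_eq h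
    exact hne ⟨u, i.injective (by rw [map_pow, he])⟩
  · have he' : e = e⁻¹ := i.injective <| calc
      i e = frobeniusAlgHom F K (i e) := (AlgHom.commutes _ e).symm
      _ = i e⁻¹ := by rw [← he, map_pow, h, inv_pow, he, map_inv₀]
    have he1 : e = 1 := by
      have he0 : e ≠ 0 := by rintro rfl; exact hne ⟨0, zero_pow three_ne_zero⟩
      have he2 : e * e = 1 := by nth_rewrite 2 [he']; exact mul_inv_cancel₀ he0
      simpa [CharTwo.neg_eq] using mul_self_eq_one_iff.mp he2
    exact hne ⟨1, by rw [one_pow, he1]⟩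

theorem exists_not_cube_eq_add_inv_of_irreducible (hq : Fintype.card F % 3 = 1) {a : F}
    (ha : Irreducible (X ^ 3 + X + C a : F[X])) :
    ∃ d, (¬∃ c, c ^ 3 = d) ∧ a = d + d⁻¹ := by
  have hp := natDegree_X_pow_three_add_X_add_C a
  let K := AlgebraicClosure F
  let i := algebraMap F K
  let σ := frobeniusAlgHom F K
  obtain ⟨y, hy⟩ := IsAlgClosed.exists_aeval_eq_zero K (X ^ 3 + X + C a)
    (by rw [degree_eq_natDegree (ne_zero_of_natDegree_gt (hp ▸ three_pos)), hp]; decide)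
  obtain ⟨t, ht0, rfl⟩ := IsAlgClosed.exists_add_inv_eq y
  have hta : t ^ 3 + (t ^ 3)⁻¹ = i a := by
    rw [← CharTwo.add_inv_pow_three_add]
    exact CharTwo.add_eq_zero.mp (by simpa using hy)
  by_contra hna
  suffices hσσ : σ (σ t) = t by
    have hmin := minpoly.eq_of_irreducible_of_monic ha hy (by monicity!)
    have := natDegree_minpoly_le_two_of_frobeniusAlgHom_apply_apply_eq
      (show σ (σ (t + t⁻¹)) = t + t⁻¹ by
        rw [map_add, map_inv₀, map_add, map_inv₀, hσσ])
    rw [← hmin, hp] at this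
    omega
  rcases map_eq_or_map_eq_inv_of_map_add_inv σ (pow_ne_zero 3 ht0)
    (by rw [hta, AlgHom.commutes]) with h | h
  · obtain ⟨d, hd⟩ := exists_algebraMap_eq_of_frobeniusAlgHom_apply_eq h
    obtain ⟨c, rfl⟩ : ∃ c, c ^ 3 = d := by
      by_contra hnc
      exact hna ⟨d, hnc, i.injective (by rw [← hta, ← hd, map_add, map_inv₀])⟩
    have hσt : σ t = t := frobeniusAlgHom_apply_eq_self_of_pow_three_eq hq
      (AlgHom.commutes σ c) (by rw [← hd, map_pow])
    rw [hσt, hσt]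
  · exact frobeniusAlgHom_apply_apply_eq_self_of_apply_pow_three_eq_inv hq ht0 h

end FiniteField

theorem stmt5_general (F : Type*) [Field F] [Fintype F] (k : ℕ)
    (hcard : Fintype.card F = 2 ^ (2 * k)) (a : F) :
    Irreducible (X ^ 3 + X + C a : F[X]) ↔
      ∃ d : F, (¬ ∃ c : F, c ^ 3 = d) ∧ a = d + d⁻¹ := by
  have : CharP F 2 := by
    have h := FiniteField.cast_card_eq_zero F
    rw [hcard, Nat.cast_pow, Nat.cast_ofNat] at h
    exact CharTwo.of_one_ne_zero_of_two_eq_zero one_ne_zero (eq_zero_of_pow_eq_zero h)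
  have hq : Fintype.card F % 3 = 1 := by rw [hcard, pow_mul, Nat.pow_mod]; norm_num
  refine ⟨FiniteField.exists_not_cube_eq_add_inv_of_irreducible hq, ?_⟩
  rintro ⟨d, hd, rfl⟩
  exact FiniteField.irreducible_X_pow_three_add_X_add_C_add_inv hd

/-- `x^3 + x + a` is irreducible over `F_{2^{2k}}` iff
`a = d + d⁻¹` for some non-cube `d`. -/
theorem stmt5 (F : Type*) [Field F] [Fintype F] (k : ℕ) (hk : 0 < k)
    (hcard : Fintype.card F = 2 ^ (2 * k)) (a : F) :
    Irreducible (X ^ 3 + X + C a : F[X]) ↔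
      ∃ d : F, (¬ ∃ c : F, c ^ 3 = d) ∧ a = d + d⁻¹ :=
  stmt5_general F k hcard a
end

section
/- Let n = 2k and let C be the set of non-cubes in F_{2^{2k}}. Define A : C → F_{2^{2k}} by A(b) = (b+1)/b^{2^{-1}}, where b^{2^{-1}} is the unique square root of b. Then A is a 2-to-1 map: A(x) = A(y) for x, y ∈ C if and only if x = y or xy = 1. -/
/-- On the set of non-cubes of `F_{2^{2k}}`, the map
`A(b) = (b+1)/b^{2^{-1}}` (with `b^{2^{-1}}` the unique square root of `b`)
is 2-to-1: `A(x) = A(y)` iff `x = y` or `x·y = 1`. -/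
theorem stmt6 (F : Type*) [Field F] [Fintype F] (k : ℕ) (hk : 0 < k)
    (hcard : Fintype.card F = 2 ^ (2 * k))
    (x y : F) (hx : ¬ ∃ c : F, c ^ 3 = x) (hy : ¬ ∃ c : F, c ^ 3 = y)
    (x' y' : F) (hx' : x' ^ 2 = x) (hy' : y' ^ 2 = y) :
    (x + 1) / x' = (y + 1) / y' ↔ x = y ∨ x * y = 1 := by
  have hx0 : x ≠ 0 := fun h => hx ⟨0, by simp [h]⟩
  have hy0 : y ≠ 0 := fun h => hy ⟨0, by simp [h]⟩
  have hx'0 : x' ≠ 0 := fun h => hx0 (by rw [← hx', h]; ring)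
  have hy'0 : y' ≠ 0 := fun h => hy0 (by rw [← hy', h]; ring)
  -- the field has characteristic 2
  obtain ⟨p, hp⟩ := CharP.exists F
  haveI := hp
  have hpp : p.Prime := CharP.char_is_prime F p
  haveI : Fact p.Prime := ⟨hpp⟩
  obtain ⟨n, -, hn⟩ := FiniteField.card F p
  have hp2 : p = 2 := by
    have hdvd : p ∣ 2 ^ (2 * k) := by
      rw [← hcard, hn]
      exact dvd_pow_self p n.pos.ne'
    have := hpp.dvd_of_dvd_pow hdvd
    exact (Nat.prime_dvd_prime_iff_eq hpp Nat.prime_two).mp this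
  subst hp2
  have hsq : ∀ a b : F, a ^ 2 = b ^ 2 → a = b := by
    intro a b hab
    exact frobenius_inj F 2 hab
  rw [div_eq_div_iff hx'0 hy'0]
  constructor
  · intro h
    have h2 : ((x + 1) * y') ^ 2 = ((y + 1) * x') ^ 2 := by rw [h]
    have h3 : (x + 1) ^ 2 * y = (y + 1) ^ 2 * x := by
      rw [mul_pow, mul_pow, hx', hy'] at h2; exact h2
    have h4 : (x - y) * (x * y - 1) = 0 := by linear_combination h3
    rcases mul_eq_zero.mp h4 with h5 | h5
    · exact Or.inl (sub_eq_zero.mp h5)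
    · exact Or.inr (sub_eq_zero.mp h5)
  · intro h
    apply hsq
    rw [mul_pow, mul_pow, hx', hy']
    rcases h with h | h
    · rw [h]
    · linear_combination (x - y) * h
end

section
/- Let n = 2k and s with gcd(s, 2k) = 1. Define A(b) = b(b+1)^{2^s + 2^{-s}} / (b + b^{2^{-s}})^{2^s+1} for non-cube b ∈ F_{2^{2k}}, where x^{2^{-s}} denotes the inverse Frobenius. Then A(b) = A(b^{-1}) for every non-cube b. -/
/-!
Since `x ↦ x ^ 2 ^ s` is an injective ring endomorphism in characteristic 2, the root `c'` of
`b⁻¹` is `b'⁻¹`. Writing `b = b' ^ 2 ^ s`, the claim then becomes an identity of rational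
functions in `b'`, valid for every exponent in place of `2 ^ s`. The denominators
`b + b'` and `b⁻¹ + b'⁻¹ = (b + b') / (b * b')` vanish together, and then both sides are the
junk value `x / 0 = 0`.
-/

section

variable {F : Type*} [Field F]

/-- The paper's `A(b)`, with `q = 2 ^ s` and `b'` in the role of `b ^ 2 ^ (-s)`. -/
def ratioA (q : ℕ) (b b' : F) : F :=
  b * ((b + 1) ^ q * (b' + 1)) / (b + b') ^ (q + 1)

theorem ratioA_inv_inv (q : ℕ) {b b' : F} (hb : b' ^ q = b) :
    ratioA q b⁻¹ b'⁻¹ = ratioA q b b' := by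
  subst hb
  rcases eq_or_ne b' 0 with rfl | hb'
  · rcases q with _ | q <;> simp [ratioA]
  have hbq : b' ^ q ≠ 0 := pow_ne_zero _ hb'
  unfold ratioA
  rw [inv_add_inv hbq hb', div_pow, add_comm b']
  field_simp
  congr 1
  rw [div_pow]
  field_simp
  ring

end

theorem stmt7_general (F : Type*) [Field F] [Fintype F] (k s : ℕ)
    (hcard : Fintype.card F = 2 ^ (2 * k))
    (b : F)
    (b' c' : F) (hb' : b' ^ 2 ^ s = b) (hc' : c' ^ 2 ^ s = b⁻¹) :
    b * ((b + 1) ^ 2 ^ s * (b' + 1)) / (b + b') ^ (2 ^ s + 1) =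
      b⁻¹ * ((b⁻¹ + 1) ^ 2 ^ s * (c' + 1)) / (b⁻¹ + c') ^ (2 ^ s + 1) := by
  have : CharP F 2 := charP_of_card_eq_prime_pow hcard
  obtain rfl : c' = b'⁻¹ := iterateFrobenius_inj F 2 s <| by
    rw [iterateFrobenius_def, iterateFrobenius_def, hc', inv_pow, hb']
  exact (ratioA_inv_inv _ hb').symm

/-- With `A(b) = b(b+1)^{2^s+2^{-s}} / (b+b^{2^{-s}})^{2^s+1}`
(where `b'`, `c'` are the inverse Frobenius images of `b`, `b⁻¹` respectively,
i.e. the unique elements with `b'^{2^s} = b` and `c'^{2^s} = b⁻¹`),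
one has `A(b) = A(b⁻¹)` for every non-cube `b`. -/
theorem stmt7 (F : Type*) [Field F] [Fintype F] (k s : ℕ) (hk : 0 < k) (hs : 0 < s)
    (hcard : Fintype.card F = 2 ^ (2 * k)) (hgcd : Nat.gcd s (2 * k) = 1)
    (b : F) (hb : ¬ ∃ c : F, c ^ 3 = b)
    (b' c' : F) (hb' : b' ^ 2 ^ s = b) (hc' : c' ^ 2 ^ s = b⁻¹) :
    b * ((b + 1) ^ 2 ^ s * (b' + 1)) / (b + b') ^ (2 ^ s + 1) =
      b⁻¹ * ((b⁻¹ + 1) ^ 2 ^ s * (c' + 1)) / (b⁻¹ + c') ^ (2 ^ s + 1) :=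
  stmt7_general F k s hcard b b' c' hb' hc'
end

section
/- Let L = F_{2^{2k}} with k even and 3 ∤ k. Then there exist cubes a, b, c ∈ L^* with a + b = ωc for some fixed element ω of multiplicative order 3, such that at least one of a, b, c lies in the subfield F_{2^k} and at least one lies outside F_{2^k}. -/
/-!
Write `q = 2 ^ k = 3 * M + 1`, so that `3 ∤ M`, and let `K = F_q` be the fixed field of
`σ x = x ^ q`. If `t ^ q = t + 1`, the cubes `a = t ^ 3` and `b = (t + 1) ^ 3 = σ a` lie outside
`K`, while `a + b = t ^ 2 + t + 1 =: x` lies in `K`. If moreover `x ^ M = ω ^ M`, then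
`c = ω ^ 2 * x ∈ K` satisfies `c ^ M = 1`, hence is a cube, as `(q ^ 2 - 1) / 3 = M * (q + 1)`.
Over `x ∈ K` such a `t` exists as soon as `x + 1 ∉ ℘ K`, where `℘ e = e ^ 2 + e` is the
Artin–Schreier map: `℘ K` has index 2 in `K`, and `σ` moves the roots of `T ^ 2 + T = δ` for any
`δ ∈ K \ ℘ K`. Since `1 = ℘ ω ∈ ℘ K`, it remains to find `x` with `x ^ M = ω ^ M` and
`x ∉ ℘ K`. Otherwise `℘ K`, which is closed under squaring, would contain `0`, the `M` solutions
of `x ^ M = ω ^ M` and their squares, the `M` solutions of `x ^ M = ω ^ (2 * M)`: that is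
`2 * M + 1 > q / 2` elements.
-/

open Polynomial

theorem Nat.exists_three_mul_add_one_eq_two_pow {k : ℕ} (hke : Even k) (hk3 : ¬ 3 ∣ k) :
    ∃ M, 3 * M + 1 = 2 ^ k ∧ ¬ 3 ∣ M := by
  have h9 : 2 ^ k % 9 = 4 ∨ 2 ^ k % 9 = 7 := by
    -- 2 has order 6 modulo 9
    rw [← Nat.div_add_mod k 6, pow_add, pow_mul, Nat.mul_mod, Nat.pow_mod]
    obtain h | h : k % 6 = 2 ∨ k % 6 = 4 := by obtain ⟨j, rfl⟩ := hke; omega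
    all_goals rw [h]; norm_num
  exact ⟨2 ^ k / 3, by omega, by omega⟩

theorem pow_three_mul_add_one_of_pow_three_eq_one {G : Type*} [Monoid G] {a : G} (h : a ^ 3 = 1)
    (n : ℕ) : a ^ (3 * n + 1) = a := by
  rw [pow_succ, pow_mul, h, one_pow, one_mul]

theorem IsCyclic.exists_pow_eq_of_pow_card_div_eq_one {G : Type*} [CommGroup G] [IsCyclic G]
    [Finite G] {n : ℕ} (hn : n ∣ Nat.card G) {g : G} (hg : g ^ (Nat.card G / n) = 1) :
    ∃ h : G, h ^ n = g := by
  have hle : (powMonoidHom n : G →* G).range ≤ (powMonoidHom (Nat.card G / n)).ker := by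
    rintro _ ⟨h, rfl⟩
    simp [← pow_mul, Nat.mul_div_cancel' hn, pow_card_eq_one']
  have heq := Subgroup.eq_of_le_of_card_ge hle <| by
    rw [IsCyclic.card_powMonoidHom_range, IsCyclic.card_powMonoidHom_ker,
      Nat.gcd_eq_right hn, Nat.gcd_eq_right (Nat.div_dvd_of_dvd hn)]
  exact (heq ▸ hg : g ∈ (powMonoidHom n : G →* G).range)

theorem IsPrimitiveRoot.card_nthRootsFinset_pow {R : Type*} [CommRing R] [IsDomain R] {ζ : R}
    {n : ℕ} (hζ : IsPrimitiveRoot ζ n) {a : R} (ha : a ≠ 0) :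
    (nthRootsFinset n (a ^ n)).card = n := by
  classical
  rw [nthRootsFinset_def, Multiset.toFinset_card_of_nodup (hζ.nthRoots_nodup (pow_ne_zero n ha)),
    hζ.card_nthRoots, if_pos ⟨a, rfl⟩]

namespace FiniteField

variable {F : Type*} [Field F] [Finite F] {n : ℕ}

theorem exists_pow_eq_of_pow_eq_one (hn : n ∣ Nat.card F - 1) {a : F} (ha : a ≠ 0)
    (h : a ^ ((Nat.card F - 1) / n) = 1) : ∃ b : F, b ^ n = a := by
  rw [← Nat.card_units] at hn h
  obtain ⟨b, hb⟩ := IsCyclic.exists_pow_eq_of_pow_card_div_eq_one hn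
    (g := Units.mk0 a ha) (Units.ext (by simpa))
  exact ⟨b, by simpa using congrArg Units.val hb⟩

theorem exists_isPrimitiveRoot_of_dvd (hn : n ∣ Nat.card F - 1) :
    ∃ ζ : F, IsPrimitiveRoot ζ n := by
  rw [← Nat.card_units] at hn
  obtain ⟨g, hg⟩ := IsCyclic.exists_ofOrder_eq_natCard (α := Fˣ)
  refine ⟨(g ^ (Nat.card Fˣ / n) : Fˣ), ?_⟩
  rw [IsPrimitiveRoot.coe_units_iff]
  exact (hg ▸ IsPrimitiveRoot.orderOf g).pow Nat.card_pos (Nat.div_mul_cancel hn).symm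

theorem ncard_pow_eq_self (hn1 : 1 < n) (hn : n - 1 ∣ Nat.card F - 1) :
    {x : F | x ^ n = x}.ncard = n := by
  obtain ⟨ζ, hζ⟩ := exists_isPrimitiveRoot_of_dvd hn
  have hset : {x : F | x ^ n = x} = insert 0 (nthRootsFinset (n - 1) (1 : F) : Set F) := by
    ext x
    rw [Set.mem_ofPred_eq, Set.mem_insert_iff, Finset.mem_coe, mem_nthRootsFinset (by omega)]
    rcases eq_or_ne x 0 with rfl | hx
    · simp [zero_pow (by omega : n ≠ 0)]
    · rw [← pow_sub_one_mul (by omega : n ≠ 0), mul_eq_right₀ hx, or_iff_right hx]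
  rw [hset, Set.ncard_insert_of_notMem, Set.ncard_coe_finset, hζ.card_nthRootsFinset]
  · omega
  · simp [mem_nthRootsFinset (by omega : 0 < n - 1), zero_pow (by omega : n - 1 ≠ 0)]

theorem exists_pow_three_eq_of_pow_eq_one {M : ℕ} (hF : Nat.card F = (3 * M + 1) ^ 2) {c : F}
    (hc0 : c ≠ 0) (hc : c ^ M = 1) : ∃ z : F, z ^ 3 = c := by
  have hF' : Nat.card F - 1 = 3 * (M * (3 * M + 2)) := by
    rw [hF]
    exact Nat.sub_eq_of_eq_add (by ring)
  refine exists_pow_eq_of_pow_eq_one ⟨_, hF'⟩ hc0 ?_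
  rw [hF', Nat.mul_div_cancel_left _ three_pos, pow_mul, hc, one_pow]

end FiniteField

section ArtinSchreier

variable (L : Type*)

def artinSchreier [CommRing L] [CharP L 2] : L →+ L where
  toFun x := x ^ 2 + x
  map_zero' := by simp
  map_add' x y := by rw [CharTwo.add_sq]; ring

variable {L} [Field L] [CharP L 2]

@[simp]
theorem artinSchreier_apply (x : L) : artinSchreier L x = x ^ 2 + x := rfl

theorem artinSchreier_sq (x : L) : artinSchreier L (x ^ 2) = artinSchreier L x ^ 2 := by
  rw [artinSchreier_apply, artinSchreier_apply, CharTwo.add_sq, ← pow_mul]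

theorem artinSchreier_eq_zero_iff {x : L} : artinSchreier L x = 0 ↔ x = 0 ∨ x = 1 := by
  rw [artinSchreier_apply, show x ^ 2 + x = x * (x + 1) by ring, mul_eq_zero,
    add_eq_zero_iff_eq_neg, CharTwo.neg_eq]

theorem artinSchreier_eq_artinSchreier_iff {x y : L} :
    artinSchreier L x = artinSchreier L y ↔ x = y ∨ x = y + 1 := by
  rw [← sub_eq_zero, ← map_sub, artinSchreier_eq_zero_iff, sub_eq_zero, sub_eq_iff_eq_add']

theorem artinSchreier_eq_one_of_pow_three_eq_one {ω : L} (h3 : ω ^ 3 = 1) (h1 : ω ≠ 1) :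
    artinSchreier L ω = 1 := by
  have h : (ω - 1) * (ω ^ 2 + ω + 1) = 0 := by linear_combination h3
  rw [artinSchreier_apply]
  linear_combination (mul_eq_zero.mp h).resolve_left (sub_ne_zero.mpr h1) -
    (CharTwo.two_eq_zero : (2 : L) = 0)

theorem index_range_artinSchreier [Finite L] : (artinSchreier L).range.index = 2 := by
  have hker : ((artinSchreier L).ker : Set L) = {0, 1} := by
    ext x
    simp only [SetLike.mem_coe, AddMonoidHom.mem_ker, artinSchreier_eq_zero_iff,
      Set.mem_insert_iff, Set.mem_singleton_iff]
  rw [AddSubgroup.index_range, ← SetLike.coe_sort_coe, hker, Nat.card_coe_set_eq,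
    Set.ncard_pair zero_ne_one]

theorem exists_pow_eq_pow_notMem_range_artinSchreier [Finite L] {M : ℕ}
    (hL : Nat.card L = 3 * M + 1) {a : L} (ha : a ≠ 0) (haM : a ^ M ≠ 1) :
    ∃ x : L, x ^ M = a ^ M ∧ x ∉ (artinSchreier L).range := by
  classical
  by_contra! hA
  set P := (artinSchreier L).range
  have hM : 0 < M := Nat.pos_of_ne_zero (by rintro rfl; exact haM (pow_zero a))
  obtain ⟨ζ, hζ⟩ := FiniteField.exists_isPrimitiveRoot_of_dvd (F := L) (n := M) ⟨3, by omega⟩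
  set A := nthRootsFinset M (a ^ M)
  have hmemA {x : L} : x ∈ A ↔ x ^ M = a ^ M := mem_nthRootsFinset hM _
  have h0A : (0 : L) ∉ A := by
    rw [hmemA, zero_pow hM.ne', eq_comm]
    exact pow_ne_zero M ha
  set S := insert 0 (A ∪ A.image (· ^ 2))
  have hSP : (S : Set L) ⊆ P := by
    have hAP {x : L} (hx : x ∈ A) : x ∈ P := hA x (hmemA.mp hx)
    intro x hx
    simp only [S, Finset.coe_insert, Finset.coe_union, Finset.coe_image, Set.mem_insert_iff,
      Set.mem_union, Finset.mem_coe, Set.mem_image] at hx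
    rcases hx with rfl | hx | ⟨y, hy, rfl⟩
    · exact zero_mem P
    · exact hAP hx
    · obtain ⟨e, he⟩ := hAP hy
      exact ⟨e ^ 2, by rw [artinSchreier_sq, he]⟩
  have hdisj : Disjoint A (A.image (· ^ 2)) := by
    rw [Finset.disjoint_left]
    intro _ hxA hx
    obtain ⟨y, hy, rfl⟩ := Finset.mem_image.mp hx
    rw [hmemA, ← pow_mul, mul_comm, pow_mul, hmemA.mp hy, sq,
      mul_eq_right₀ (pow_ne_zero M ha)] at hxA
    exact haM hxA
  have hS : S.card = 2 * M + 1 := by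
    rw [Finset.card_insert_of_notMem (by simpa using h0A), Finset.card_union_of_disjoint hdisj,
      Finset.card_image_of_injective _ (f := fun x : L => x ^ 2) (frobenius_inj L 2),
      hζ.card_nthRootsFinset_pow ha]
    ring
  have hSP' : S.card ≤ Nat.card P := by
    rw [← Set.ncard_coe_finset, ← SetLike.coe_sort_coe, Nat.card_coe_set_eq]
    exact Set.ncard_le_ncard hSP
  have hP : 2 * Nat.card P = Nat.card L := by
    rw [← index_range_artinSchreier (L := L), AddSubgroup.index_mul_card]
  omega

end ArtinSchreier

section Involution

variable {F : Type*} [Field F] [CharP F 2] (σ : F →+* F)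

theorem exists_apply_eq_add_one (hσ : ∀ x, σ (σ x) = x) (hσ1 : σ ≠ RingHom.id F) :
    ∃ γ, σ γ = γ + 1 := by
  obtain ⟨w, hw⟩ : ∃ w, σ w ≠ w := by
    by_contra! h
    exact hσ1 (RingHom.ext h)
  have hd : w + σ w ≠ 0 := fun h => hw ((add_eq_zero_iff_eq_neg'.mp h).trans (CharTwo.neg_eq w))
  refine ⟨w / (w + σ w), ?_⟩
  rw [map_div₀, map_add, hσ, add_comm (σ w) w, div_add_one hd, ← add_assoc,
    CharTwo.add_self_eq_zero, zero_add]

theorem exists_artinSchreier_eq_and_apply_eq_add_one [Finite F] (hσ : ∀ x, σ (σ x) = x)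
    (hσ1 : σ ≠ RingHom.id F) {y : σ.eqLocusField (RingHom.id F)}
    (hy : y ∉ (artinSchreier _).range) : ∃ t : F, artinSchreier F t = y ∧ σ t = t + 1 := by
  obtain ⟨γ, hγ⟩ := exists_apply_eq_add_one σ hσ hσ1
  have hδ : artinSchreier F γ ∈ σ.eqLocusField (RingHom.id F) := by
    rw [RingHom.mem_eqLocusField, RingHom.id_apply, artinSchreier_apply, map_add, map_pow, hγ,
      CharTwo.add_sq]
    linear_combination (CharTwo.two_eq_zero : (2 : F) = 0)
  have hδP : (⟨_, hδ⟩ : σ.eqLocusField (RingHom.id F)) ∉ (artinSchreier _).range := by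
    rintro ⟨e, he⟩
    have he' : σ e = e := e.2
    have hγK : σ γ = γ := by
      rcases artinSchreier_eq_artinSchreier_iff.mp (congrArg Subtype.val he) with h | h
      · rwa [h] at he'
      · rwa [h, map_add, map_one, add_left_inj] at he'
    exact one_ne_zero (left_eq_add.mp (hγK ▸ hγ))
  obtain ⟨e, he⟩ := (AddSubgroup.add_mem_iff_of_index_two index_range_artinSchreier).mpr
    (iff_of_false hy hδP)
  refine ⟨γ + e, ?_, ?_⟩
  · have he' : artinSchreier F e = y + artinSchreier F γ := congrArg Subtype.val he
    rw [map_add, he']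
    linear_combination (artinSchreier F γ) * (CharTwo.two_eq_zero : (2 : F) = 0)
  · rw [map_add, hγ, show σ e = e from e.2, add_right_comm]

end Involution

section IterateFrobenius

variable {F : Type*} [Field F] [Fintype F] [CharP F 2] {k : ℕ}

theorem iterateFrobenius_iterateFrobenius (hF : Fintype.card F = 2 ^ (2 * k)) (x : F) :
    iterateFrobenius F 2 k (iterateFrobenius F 2 k x) = x := by
  rw [iterateFrobenius_def, iterateFrobenius_def, ← pow_mul, ← pow_add, ← two_mul, ← hF,
    FiniteField.pow_card]

theorem card_eqLocusField_iterateFrobenius (hF : Fintype.card F = 2 ^ (2 * k)) (hk : k ≠ 0) :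
    Nat.card ((iterateFrobenius F 2 k).eqLocusField (RingHom.id F)) = 2 ^ k := by
  refine FiniteField.ncard_pow_eq_self (Nat.one_lt_two_pow hk) ?_
  rw [Nat.card_eq_fintype_card, hF, pow_mul', ← one_pow 2]
  exact Nat.sub_dvd_pow_sub_pow _ _ _

theorem iterateFrobenius_ne_id (hF : Fintype.card F = 2 ^ (2 * k)) (hk : k ≠ 0) :
    iterateFrobenius F 2 k ≠ RingHom.id F := by
  intro h
  have hcard := card_eqLocusField_iterateFrobenius hF hk
  have huniv : Nat.card ((RingHom.id F).eqLocusField (RingHom.id F)) = Nat.card F :=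
    Nat.card_congr (Equiv.subtypeUnivEquiv fun _ => rfl)
  rw [h, huniv, Nat.card_eq_fintype_card, hF] at hcard
  have := Nat.pow_right_injective le_rfl hcard
  omega

theorem exists_pow_eq_and_sq_add_add_one_eq (hF : Fintype.card F = 2 ^ (2 * k)) {M : ℕ}
    (hM : 3 * M + 1 = 2 ^ k) {ω : F} (hω3 : ω ^ 3 = 1) (hωM : ω ^ M ≠ 1) :
    ∃ x t : F, x ^ 2 ^ k = x ∧ x ^ M = ω ^ M ∧ t ^ 2 + t + 1 = x ∧ t ^ 2 ^ k = t + 1 := by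
  set K := (iterateFrobenius F 2 k).eqLocusField (RingHom.id F)
  have hk : k ≠ 0 := by
    rintro rfl
    exact hωM (by rw [show M = 0 by omega, pow_zero])
  have hω0 : ω ≠ 0 := by
    rintro rfl
    norm_num at hω3
  have hωK : ω ∈ K := by
    show ω ^ 2 ^ k = ω
    rw [← hM, pow_three_mul_add_one_of_pow_three_eq_one hω3]
  have hω1 : artinSchreier K ⟨ω, hωK⟩ = 1 :=
    Subtype.ext (artinSchreier_eq_one_of_pow_three_eq_one hω3 (by rintro rfl; simp at hωM))
  obtain ⟨x, hxM, hxP⟩ := exists_pow_eq_pow_notMem_range_artinSchreier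
    ((card_eqLocusField_iterateFrobenius hF hk).trans hM.symm) (a := ⟨ω, hωK⟩)
    (fun h => hω0 (congrArg Subtype.val h)) (fun h => hωM (congrArg Subtype.val h))
  obtain ⟨t, ht, htσ⟩ := exists_artinSchreier_eq_and_apply_eq_add_one _
    (iterateFrobenius_iterateFrobenius hF) (iterateFrobenius_ne_id hF hk) (y := x + 1)
    fun h => hxP (add_sub_cancel_right x 1 ▸ sub_mem h (AddMonoidHom.mem_range.mpr ⟨_, hω1⟩))
  refine ⟨x, t, x.2, congrArg Subtype.val hxM, ?_, htσ⟩
  rw [← artinSchreier_apply, ht, Subfield.coe_add, Subfield.coe_one, add_assoc,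
    CharTwo.add_self_eq_zero, add_zero]

end IterateFrobenius

theorem stmt9_general (F : Type*) [Field F] [Fintype F] (k : ℕ)
    (hke : Even k) (hk3 : ¬ 3 ∣ k)
    (hcard : Fintype.card F = 2 ^ (2 * k))
    (ω : F) (hω : orderOf ω = 3) :
    ∃ a b c : F, a ≠ 0 ∧ b ≠ 0 ∧ c ≠ 0 ∧
      (∃ x : F, x ^ 3 = a) ∧ (∃ y : F, y ^ 3 = b) ∧ (∃ z : F, z ^ 3 = c) ∧
      a + b = ω * c ∧
      (a ^ 2 ^ k = a ∨ b ^ 2 ^ k = b ∨ c ^ 2 ^ k = c) ∧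
      (a ^ 2 ^ k ≠ a ∨ b ^ 2 ^ k ≠ b ∨ c ^ 2 ^ k ≠ c) := by
  have : CharP F 2 := charP_of_card_eq_prime_pow hcard
  have h2 : (2 : F) = 0 := CharTwo.two_eq_zero
  obtain ⟨M, hM, hM3⟩ := Nat.exists_three_mul_add_one_eq_two_pow hke hk3
  have hω3 : ω ^ 3 = 1 := hω ▸ pow_orderOf_eq_one ω
  have hωM : ω ^ M ≠ 1 := fun h => hM3 (hω ▸ orderOf_dvd_of_pow_eq_one h)
  have hM0 : M ≠ 0 := by rintro rfl; exact hωM (pow_zero ω)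
  obtain ⟨x, t, hxK, hxM, htx, htK⟩ := exists_pow_eq_and_sq_add_add_one_eq hcard hM hω3 hωM
  have hc : (ω ^ 2 * x) ^ M = 1 := by
    rw [mul_pow, hxM, ← pow_mul, ← pow_add, show 2 * M + M = 3 * M by ring, pow_mul, hω3, one_pow]
  have hc0 : ω ^ 2 * x ≠ 0 := ne_zero_pow hM0 (hc ▸ one_ne_zero)
  have ht : t * (t + 1) ≠ 0 := fun h => hωM (by
    rw [← hxM, show x = 1 by linear_combination h - htx, one_pow])
  have hsum : t ^ 3 + (t + 1) ^ 3 = x := by linear_combination htx + (t ^ 3 + t ^ 2 + t) * h2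
  have hF : Nat.card F = (3 * M + 1) ^ 2 := by rw [Nat.card_eq_fintype_card, hcard, pow_mul', hM]
  refine ⟨t ^ 3, (t + 1) ^ 3, ω ^ 2 * x, pow_ne_zero 3 (left_ne_zero_of_mul ht),
    pow_ne_zero 3 (right_ne_zero_of_mul ht), hc0, ⟨t, rfl⟩, ⟨t + 1, rfl⟩,
    FiniteField.exists_pow_three_eq_of_pow_eq_one hF hc0 hc, by linear_combination hsum - x * hω3,
    Or.inr (Or.inr ?_), Or.inl fun h => ?_⟩
  · rw [mul_pow, ← pow_mul, mul_comm 2, pow_mul, hxK, ← hM,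
      pow_three_mul_add_one_of_pow_three_eq_one hω3]
  · rw [← pow_mul, mul_comm, pow_mul, htK] at h
    exact right_ne_zero_of_mul hc0 (by linear_combination -hsum + h + t ^ 3 * h2)

/-- In `L = F_{2^{2k}}` with `k` even and `3 ∤ k`, for `ω` of order 3
there exist nonzero cubes `a, b, c` with `a + b = ω·c`, at least one of `a, b, c`
in the subfield `F_{2^k}` (the fixed field of `x ↦ x^{2^k}`) and at least one outside. -/
theorem stmt9 (F : Type*) [Field F] [Fintype F] (k : ℕ) (hk : 0 < k)
    (hke : Even k) (hk3 : ¬ 3 ∣ k)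
    (hcard : Fintype.card F = 2 ^ (2 * k))
    (ω : F) (hω : orderOf ω = 3) :
    ∃ a b c : F, a ≠ 0 ∧ b ≠ 0 ∧ c ≠ 0 ∧
      (∃ x : F, x ^ 3 = a) ∧ (∃ y : F, y ^ 3 = b) ∧ (∃ z : F, z ^ 3 = c) ∧
      a + b = ω * c ∧
      (a ^ 2 ^ k = a ∨ b ^ 2 ^ k = b ∨ c ^ 2 ^ k = c) ∧
      (a ^ 2 ^ k ≠ a ∨ b ^ 2 ^ k ≠ b ∨ c ^ 2 ^ k ≠ c) :=
  stmt9_general F k hke hk3 hcard ω hω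
end

section
/- Let k be even with 3 ∤ k, s an integer with gcd(s, 2k) = 1, and ω ∈ F_{2^{2k}} of multiplicative order 3. Suppose β, γ ∈ F_{2^{2k}}^* satisfy γ^{2^s+1} + ω β^{2^s+1} + 1 = 0 and γ^{2^k-1} ≠ β^{2^k-1}. Then the polynomial G(y) = y^{2^s+1} + (ω β^{2^s+2^k} + γ^{2^s+2^k}) y^{2^s} + (ω β^{2^{k+s}+1} + γ^{2^{k+s}+1}) y + 1 has no roots in F_{2^{2k}}. -/
/-- With `k` even, `3 ∤ k`, `gcd(s,2k)=1`, `ω` of order 3, and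
`β, γ ≠ 0` satisfying `γ^{2^s+1} + ω·β^{2^s+1} + 1 = 0` and `γ^{2^k-1} ≠ β^{2^k-1}`,
the polynomial `G(y) = y^{2^s+1} + (ωβ^{2^s+2^k}+γ^{2^s+2^k})y^{2^s}
+ (ωβ^{2^{k+s}+1}+γ^{2^{k+s}+1})y + 1` has no roots in `F_{2^{2k}}`. -/
theorem stmt11 (F : Type*) [Field F] [Fintype F] (k s : ℕ) (hk : 0 < k)
    (hke : Even k) (hk3 : ¬ 3 ∣ k)
    (hcard : Fintype.card F = 2 ^ (2 * k)) (hgcd : Nat.gcd s (2 * k) = 1)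
    (ω : F) (hω : orderOf ω = 3)
    (β γ : F) (hβ : β ≠ 0) (hγ : γ ≠ 0)
    (h1 : γ ^ (2 ^ s + 1) + ω * β ^ (2 ^ s + 1) + 1 = 0)
    (h2 : γ ^ (2 ^ k - 1) ≠ β ^ (2 ^ k - 1)) :
    ∀ y : F, y ^ (2 ^ s + 1)
      + (ω * β ^ (2 ^ s + 2 ^ k) + γ ^ (2 ^ s + 2 ^ k)) * y ^ 2 ^ s
      + (ω * β ^ (2 ^ (k + s) + 1) + γ ^ (2 ^ (k + s) + 1)) * y + 1 ≠ 0 := by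
  intro y hy
  -- characteristic 2
  haveI hfact : Fact (Nat.Prime (ringChar F)) := ⟨CharP.char_is_prime F _⟩
  haveI hchar : CharP F 2 := by
    obtain ⟨n, hpp, hc⟩ := FiniteField.card F (ringChar F)
    have hd : ringChar F ∣ 2 ^ (2 * k) := by
      rw [← hcard, hc]; exact dvd_pow_self _ n.pos.ne'
    have h2' := (Nat.prime_dvd_prime_iff_eq hpp Nat.prime_two).1 (hpp.dvd_of_dvd_pow hd)
    rw [← h2']; exact ringChar.charP F
  haveI hp2 : Fact (Nat.Prime 2) := ⟨Nat.prime_two⟩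
  have htwo : (2 : F) = 0 := by
    have := CharP.cast_eq_zero F 2
    exact_mod_cast this
  have hω3 : ω ^ 3 = 1 := by rw [← hω]; exact pow_orderOf_eq_one ω
  have hωne : ω ≠ 0 := by
    intro h; rw [h] at hω3; simp at hω3
  -- s is odd
  have hsodd : Odd s := by
    rcases Nat.even_or_odd s with he | ho
    · exfalso
      have : (2:ℕ) ∣ Nat.gcd s (2*k) := Nat.dvd_gcd he.two_dvd ⟨k, rfl⟩
      rw [hgcd] at this
      omega
    · exact ho
  -- 3 ∣ 2^s + 1
  have h3q : (3:ℕ) ∣ 2 ^ s + 1 := by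
    have : ((2 ^ s + 1 : ℕ) : ZMod 3) = 0 := by
      push_cast
      rw [show ((2:ZMod 3)) = -1 by decide, hsodd.neg_one_pow]
      ring
    exact (ZMod.natCast_eq_zero_iff _ 3).1 this
  -- 2^k = 3*t + 1
  have h3k : (3:ℕ) ∣ 2 ^ k - 1 := by
    have h1k : (1:ℕ) ≤ 2 ^ k := Nat.one_le_two_pow
    have : ((2 ^ k - 1 : ℕ) : ZMod 3) = 0 := by
      push_cast [h1k]
      rw [show ((2:ZMod 3)) = -1 by decide, hke.neg_one_pow]
      ring
    exact (ZMod.natCast_eq_zero_iff _ 3).1 this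
  obtain ⟨t, ht⟩ := h3k
  have h2kt : 2 ^ k = 3 * t + 1 := by
    have : (1:ℕ) ≤ 2 ^ k := Nat.one_le_two_pow
    omega
  have hωQ : ω ^ (2:ℕ) ^ k = ω := by
    rw [h2kt, pow_add, pow_mul, hω3, one_pow, pow_one, one_mul]
  -- abbreviations
  set b := β ^ (2 ^ k - 1) with hbdef
  set c := γ ^ (2 ^ k - 1) with hcdef
  have hQ1 : 2 ^ k - 1 + 1 = 2 ^ k := Nat.sub_add_cancel Nat.one_le_two_pow
  clear_value b c
  have hb : β * b = β ^ (2:ℕ) ^ k := by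
    rw [hbdef, ← pow_succ', hQ1]
  have hc : γ * c = γ ^ (2:ℕ) ^ k := by
    rw [hcdef, ← pow_succ', hQ1]
  -- char-2 version of h1
  have h1' : γ ^ (2 ^ s + 1) = ω * β ^ (2 ^ s + 1) + 1 := by
    linear_combination h1 - (ω * β ^ (2 ^ s + 1) + 1) * htwo
  -- Frobenius (2^k power) of h1, in terms of b, c
  have hQ' : (γ * c) ^ (2 ^ s + 1) = ω * (β * b) ^ (2 ^ s + 1) + 1 := by
    have e : (γ ^ (2 ^ s + 1)) ^ (2:ℕ) ^ k = (ω * β ^ (2 ^ s + 1) + 1) ^ (2:ℕ) ^ k := by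
      rw [h1']
    rw [add_pow_char_pow (R := F) _ _ 2 k, mul_pow, one_pow, hωQ] at e
    calc (γ * c) ^ (2 ^ s + 1) = ((γ ^ (2:ℕ)^k) ^ (2^s+1)) := by rw [hc]
      _ = (γ ^ (2^s+1)) ^ (2:ℕ)^k := by rw [← pow_mul, ← pow_mul, Nat.mul_comm]
      _ = ω * ((β ^ (2^s+1)) ^ (2:ℕ)^k) + 1 := e
      _ = ω * ((β ^ (2:ℕ)^k) ^ (2^s+1)) + 1 := by
            rw [← pow_mul, ← pow_mul, Nat.mul_comm]
      _ = ω * (β * b) ^ (2 ^ s + 1) + 1 := by rw [hb]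
  have e1 : ω^2 * γ^(2^s+1) = β^(2^s+1) + ω^2 := by
    linear_combination ω^2 * h1' + β^(2^s+1) * hω3
  have e2 : ω^2 * (γ*c)^(2^s+1) = (β*b)^(2^s+1) + ω^2 := by
    linear_combination ω^2 * hQ' + (β*b)^(2^s+1) * hω3
  -- rewrite hy into b,c form
  have hy' : y ^ (2^s+1)
      + (ω * (β^(2:ℕ)^s * (β * b)) + γ^(2:ℕ)^s * (γ * c)) * y ^ (2:ℕ)^s
      + (ω * ((β * b)^(2:ℕ)^s * β) + (γ * c)^(2:ℕ)^s * γ) * y + 1 = 0 := by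
    rw [hb, hc]
    have eb : β ^ (2^s + 2^k) = β ^ (2:ℕ)^s * β ^ (2:ℕ)^k := pow_add β _ _
    have ec : γ ^ (2^s + 2^k) = γ ^ (2:ℕ)^s * γ ^ (2:ℕ)^k := pow_add γ _ _
    have eb2 : β ^ (2^(k+s) + 1) = (β ^ (2:ℕ)^k) ^ (2:ℕ)^s * β := by
      rw [pow_add, pow_one, ← pow_mul, ← pow_add]
    have ec2 : γ ^ (2^(k+s) + 1) = (γ ^ (2:ℕ)^k) ^ (2:ℕ)^s * γ := by
      rw [pow_add, pow_one, ← pow_mul, ← pow_add]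
    rw [← eb, ← ec, ← eb2, ← ec2]
    exact hy
  -- key identity
  have key : β^(2^s+1) * ((y^(2:ℕ)^s + b^(2:ℕ)^s) * (y + b))
      = ω^2 * (γ^(2^s+1) * ((y^(2:ℕ)^s + c^(2:ℕ)^s) * (y + c))) := by
    linear_combination ω^2 * hy' - y^(2^s+1) * e1 - e2
      - (β^(2^s+1) * b * y^(2:ℕ)^s + β^(2^s+1) * b^(2:ℕ)^s * y) * hω3
      - (ω^2 * y^(2^s+1) + ω^2 * γ^(2^s+1) * c * y^(2:ℕ)^s
         + ω^2 * γ^(2^s+1) * c^(2:ℕ)^s * y + ω^2) * htwo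
  have frob : ∀ u v : F, (u + v) ^ (2:ℕ)^s = u ^ (2:ℕ)^s + v ^ (2:ℕ)^s :=
    fun u v => add_pow_char_pow u v 2 s
  have key' : β^(2^s+1) * (y + b)^(2^s+1) = ω^2 * (γ^(2^s+1) * (y + c)^(2^s+1)) := by
    rw [pow_succ (y+b), pow_succ (y+c), frob, frob]; exact key
  -- case analysis
  by_cases hu : y + b = 0
  · have hv : (y + c) ^ (2^s+1) = 0 := by
      have : ω^2 * (γ^(2^s+1) * (y + c)^(2^s+1)) = 0 := by rw [← key', hu]; ring
      rcases mul_eq_zero.1 this with h | h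
      · exact absurd h (pow_ne_zero 2 hωne)
      rcases mul_eq_zero.1 h with h | h
      · exact absurd h (pow_ne_zero _ hγ)
      · exact h
    have hv0 : y + c = 0 := pow_eq_zero_iff (by positivity : 2^s+1 ≠ 0) |>.1 hv
    have hbc : b = c := by linear_combination hu - hv0
    exact h2 hbc.symm
  · have hv : y + c ≠ 0 := by
      intro hv0
      apply hu
      have : β^(2^s+1) * (y + b)^(2^s+1) = 0 := by rw [key', hv0]; ring
      rcases mul_eq_zero.1 this with h | h
      · exact absurd h (pow_ne_zero _ hβ)
      · exact pow_eq_zero_iff (by positivity : 2^s+1 ≠ 0) |>.1 h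
    -- ω² is a (2^s+1)-th power
    set w := (β * (y + b)) * (γ * (y + c))⁻¹ with hwdef
    have hwne : w ≠ 0 := by
      apply mul_ne_zero (mul_ne_zero hβ hu)
      exact inv_ne_zero (mul_ne_zero hγ hv)
    have hw : w ^ (2^s+1) = ω^2 := by
      rw [hwdef, mul_pow, inv_pow, ← div_eq_mul_inv,
        div_eq_iff (pow_ne_zero _ (mul_ne_zero hγ hv))]
      rw [mul_pow, mul_pow]
      linear_combination key'
    obtain ⟨m, hm⟩ := h3q
    set z := w ^ m with hzdef
    have hz3 : z ^ 3 = ω ^ 2 := by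
      rw [hzdef, ← pow_mul, Nat.mul_comm, ← hm, hw]
    have hz9 : z ^ 9 = 1 := by
      have : z ^ 9 = (z^3)^3 := by ring
      rw [this, hz3, ← pow_mul, show 2*3 = 3*2 by ring, pow_mul, hω3, one_pow]
    have hzne3 : z ^ 3 ≠ 1 := by
      rw [hz3]
      intro h
      have : orderOf ω ∣ 2 := orderOf_dvd_of_pow_eq_one h
      rw [hω] at this; omega
    have hdvd9 : orderOf z ∣ 9 := orderOf_dvd_of_pow_eq_one hz9
    have hnd3 : ¬ orderOf z ∣ 3 := fun h => hzne3 (orderOf_dvd_iff_pow_eq_one.1 h)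
    have hord : orderOf z = 9 := by
      have hdvd9' : orderOf z ∣ 3 ^ 2 := by
        rw [show (3:ℕ)^2 = 9 by norm_num]; exact hdvd9
      obtain ⟨m', hm2, hdm⟩ := (Nat.dvd_prime_pow Nat.prime_three).1 hdvd9'
      have hm' : m' = 0 ∨ m' = 1 ∨ m' = 2 := by omega
      rcases hm' with rfl | rfl | rfl
      · exact absurd (by rw [hdm]; exact one_dvd 3) hnd3
      · exact absurd (by rw [hdm]; norm_num) hnd3
      · rw [hdm]; norm_num
    have hzcard : z ^ (Fintype.card F - 1) = 1 :=
      FiniteField.pow_card_sub_one_eq_one z (pow_ne_zero m hwne)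
    have h9d : (9:ℕ) ∣ 2 ^ (2*k) - 1 := by
      rw [← hcard, ← hord]
      exact orderOf_dvd_of_pow_eq_one hzcard
    -- 9 ∣ 2^(2k) - 1 implies 3 ∣ k
    apply hk3
    have h1k : (1:ℕ) ≤ 2 ^ (2*k) := Nat.one_le_two_pow
    have hc9 : ((2:ZMod 9)) ^ (2*k) = 1 := by
      have := (ZMod.natCast_eq_zero_iff _ 9).2 h9d
      push_cast [h1k] at this
      linear_combination this
    have h4 : ((4:ZMod 9)) ^ k = 1 := by
      rw [pow_mul] at hc9; norm_num at hc9; exact hc9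
    have ho4 : orderOf (4:ZMod 9) = 3 := orderOf_eq_prime (by decide) (by decide)
    have := orderOf_dvd_of_pow_eq_one h4
    rwa [ho4] at this
end

section
/- Let k be even with 3 ∤ k, s with gcd(s, 2k) = 1, ω ∈ F_{2^{2k}} of order 3, δ ∈ F_{2^{2k}} \ F_{2^k}, and β, γ ∈ F_{2^{2k}}^* with γ^{2^s+1} + ω β^{2^s+1} + 1 = 0 and γ^{2^k-1} ≠ β^{2^k-1}. Then F(x) = x^{2^s+1} + x^{2^{k+s}+2^k} + (ω β^{2^s+2^k} + γ^{2^s+2^k}) x^{2^{k+s}+1} + (ω β^{2^{k+s}+1} + γ^{2^{k+s}+1}) x^{2^k+2^s} + δ x^{2^k+1} is APN on F_{2^{2k}}: for every nonzero a and every b in F_{2^{2k}}, the equation F(x+a) + F(x) = b has at most 2 solutions x. -/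
/-!
Write `x̄ = x ^ 2 ^ k` and `σ x = x ^ 2 ^ s`. Then
`F(x) = x^{σ+1} + x̄^{σ+1} + c x̄^σ x + c̄ x^σ x̄ + δ x̄ x` with `c = ω β^σ β̄ + γ^σ γ̄`,
and APN-ness says that for `a ≠ 0` the polar form `B(a, ·)` of `F` has kernel `{0, a}`.
Since `B̄ - B = (δ̄ - δ)(x̄ a + ā x)` and `δ̄ ≠ δ`, a kernel element is `z = u a` with `ū = u`,
and then `B(a, u a) = (u^σ + u) G(a)` with `G(x) = F(x) - δ x̄ x`; as `gcd(s, 2k) = 1`,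
`u^σ = u` forces `u ∈ F₂`. It remains that `G(a) ≠ 0`: writing `ā = t a`, the relation
`γ^{σ+1} + ω β^{σ+1} = 1` factors `G(a)` as `a^{σ+1} (U^{σ+1} + ω V^{σ+1})` with
`U = γ t + γ̄`, `V = β t + β̄`. Here `V = 0` would force `γ^{2^k-1} = β^{2^k-1}`, and otherwise
`U / V` is a `(2^s+1)`-th root of `ω` in `F_{2^k}`, impossible because `9 ∤ 2^k - 1`.
-/

def apnFun {F : Type*} [Field F] (k s : ℕ) (ω β γ δ : F) (x : F) : F :=
  x ^ (2 ^ s + 1) + x ^ (2 ^ (k + s) + 2 ^ k)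
    + (ω * β ^ (2 ^ s + 2 ^ k) + γ ^ (2 ^ s + 2 ^ k)) * x ^ (2 ^ (k + s) + 1)
    + (ω * β ^ (2 ^ (k + s) + 1) + γ ^ (2 ^ (k + s) + 1)) * x ^ (2 ^ k + 2 ^ s)
    + δ * x ^ (2 ^ k + 1)

open Finset Function

lemma two_pow_mod_three_of_even {k : ℕ} (hk : Even k) : 2 ^ k % 3 = 1 := by
  obtain ⟨m, rfl⟩ := hk
  rw [← two_mul, pow_mul, Nat.pow_mod]
  norm_num

lemma two_pow_mod_three_of_odd {s : ℕ} (hs : Odd s) : 2 ^ s % 3 = 2 := by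
  obtain ⟨m, rfl⟩ := hs
  rw [pow_succ, pow_mul, Nat.mul_mod, Nat.pow_mod]
  norm_num

lemma two_pow_mod_nine_ne_one {k : ℕ} (hk : Even k) (hk3 : ¬ 3 ∣ k) : 2 ^ k % 9 ≠ 1 := by
  have hr : k % 6 = 2 ∨ k % 6 = 4 := by
    obtain ⟨m, rfl⟩ := hk
    omega
  rw [← Nat.div_add_mod k 6, pow_add, pow_mul, Nat.mul_mod, Nat.pow_mod]
  rcases hr with hr | hr <;> rw [hr] <;> norm_num

lemma pow_two_pow_mul_self_ne_of_orderOf_eq_three {M : Type*} [GroupWithZero M] {k s : ℕ}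
    (hk : Even k) (hk3 : ¬ 3 ∣ k) (hs : Odd s) {ω r : M} (hω : orderOf ω = 3)
    (hr : r ^ 2 ^ k = r) : r ^ 2 ^ s * r ≠ ω := by
  intro hrω
  rcases eq_or_ne r 0 with rfl | hr0
  · simp [← hrω] at hω
  have hr1 : r ^ (2 ^ k - 1) = 1 :=
    (mul_left_eq_self₀.1 ((pow_sub_one_mul (Nat.two_pow_pos k).ne' r).trans hr)).resolve_right hr0
  obtain ⟨e, he⟩ : 3 ∣ 2 ^ k - 1 := by have := two_pow_mod_three_of_even hk; omega
  obtain ⟨A, hA⟩ : 3 ∣ 2 ^ s + 1 := by have := two_pow_mod_three_of_odd hs; omega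
  have hωe : ω ^ e = 1 := by
    rw [← hrω, ← pow_succ, ← pow_mul, hA, mul_comm 3, mul_assoc, ← he, mul_comm, pow_mul, hr1,
      one_pow]
  have h3e : 3 ∣ e := hω ▸ orderOf_dvd_of_pow_eq_one hωe
  have := two_pow_mod_nine_ne_one hk hk3
  have := k.one_le_two_pow
  omega

lemma pow_mul_ne_mul_pow_of_pow_sub_one_ne {M : Type*} [CommMonoidWithZero M]
    [IsCancelMulZero M] {n : ℕ} (hn : n ≠ 0) {x y : M} (hx : x ≠ 0) (hy : y ≠ 0)
    (h : x ^ (n - 1) ≠ y ^ (n - 1)) : x ^ n * y ≠ y ^ n * x := by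
  rw [← pow_sub_one_mul hn x, ← pow_sub_one_mul hn y, mul_assoc, mul_assoc, mul_comm y x]
  exact fun h' => h (mul_right_cancel₀ (mul_ne_zero hx hy) h')

lemma pow_eq_self_of_pow_pow_eq_self {F : Type*} [Field F] [Fintype F] {p n s : ℕ}
    (hcard : Fintype.card F = p ^ n) (hsn : Nat.Coprime s n) {u : F} (hu : u ^ p ^ s = u) :
    u ^ p = u := by
  have hper : ∀ m, IsPeriodicPt (· ^ p) m u ↔ u ^ p ^ m = u := fun m => by
    rw [IsPeriodicPt, IsFixedPt, pow_iterate]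
  have hn : IsPeriodicPt (· ^ p) n u := (hper n).2 (hcard ▸ FiniteField.pow_card u)
  simpa using (hper 1).1 (hsn.gcd_eq_one ▸ ((hper s).2 hu).gcd hn)

lemma iterateFrobenius_iterateFrobenius_of_card {F : Type*} [Field F] [Fintype F] {p k : ℕ}
    [ExpChar F p] (hcard : Fintype.card F = p ^ (2 * k)) (x : F) :
    iterateFrobenius F p k (iterateFrobenius F p k x) = x := by
  rw [← iterateFrobenius_add_apply, iterateFrobenius_def, ← two_mul, ← hcard, FiniteField.pow_card]

lemma card_filter_eq_le_two {α β : Type*} [Fintype α] [Add α] [DecidableEq β] (f : α → β)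
    (a : α) (hf : ∀ x y, f x = f y → y = x ∨ y = x + a) (b : β) :
    (univ.filter fun x => f x = b).card ≤ 2 := by
  classical
  obtain ⟨x, hx⟩ | hempty := (univ.filter fun x => f x = b).eq_empty_or_nonempty.symm
  · calc (univ.filter fun x => f x = b).card ≤ ({x, x + a} : Finset α).card := by
          refine card_le_card fun y hy => ?_
          simp only [mem_filter, mem_univ, true_and] at hx hy
          simpa using hf x y (hx.trans hy.symm)
      _ ≤ 2 := card_le_two
  · simp [hempty]

section QuadForm

variable {F : Type*} [Field F] (σ τ : F →+* F)

/-- `F(x)` of the header, with `τ` in the role of `x ↦ x̄`. -/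
def quadForm (c δ x : F) : F :=
  σ x * x + σ (τ x) * τ x + c * σ (τ x) * x + τ c * σ x * τ x + δ * τ x * x

def polarForm (c δ a x : F) : F :=
  σ x * a + σ a * x + σ (τ x) * τ a + σ (τ a) * τ x + c * (σ (τ x) * a + σ (τ a) * x)
    + τ c * (σ x * τ a + σ a * τ x) + δ * (τ x * a + τ a * x)

variable {σ τ}

lemma quadForm_add_add [CharP F 2] (c δ a x : F) :
    quadForm σ τ c δ (x + a) + quadForm σ τ c δ x + quadForm σ τ c δ a
      = polarForm σ τ c δ a x := by
  simp only [quadForm, polarForm, map_add]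
  linear_combination (norm := (ring_nf; reduce_mod_char!))

lemma polarForm_add (c δ a x y : F) :
    polarForm σ τ c δ a (x + y) = polarForm σ τ c δ a x + polarForm σ τ c δ a y := by
  simp only [polarForm, map_add]
  ring

lemma map_polarForm_sub_polarForm (hτ : ∀ x, τ (τ x) = x) (hστ : ∀ x, τ (σ x) = σ (τ x))
    (c δ a x : F) :
    τ (polarForm σ τ c δ a x) - polarForm σ τ c δ a x = (τ δ - δ) * (τ x * a + τ a * x) := by
  simp only [polarForm, map_add, map_mul, hτ, hστ]
  ring

lemma polarForm_mul_self [CharP F 2] {u : F} (hu : τ u = u) (c δ a : F) :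
    polarForm σ τ c δ a (u * a) = (σ u + u) * quadForm σ τ c 0 a := by
  simp only [polarForm, quadForm, map_mul, hu]
  linear_combination (norm := (ring_nf; reduce_mod_char!))

lemma eq_zero_or_eq_of_polarForm_eq_zero [CharP F 2] (hτ : ∀ x, τ (τ x) = x)
    (hστ : ∀ x, τ (σ x) = σ (τ x)) {c δ : F} (hδ : τ δ ≠ δ)
    (hσ : ∀ u, σ u = u → u = 0 ∨ u = 1) (hQ : ∀ a ≠ 0, quadForm σ τ c 0 a ≠ 0)
    {a z : F} (ha : a ≠ 0) (hz : polarForm σ τ c δ a z = 0) : z = 0 ∨ z = a := by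
  have hza : τ z * a = τ a * z := by
    have h := map_polarForm_sub_polarForm hτ hστ c δ a z
    rw [hz, map_zero, sub_zero, zero_eq_mul] at h
    rw [← CharTwo.add_eq_zero]
    exact h.resolve_left (sub_ne_zero.2 hδ)
  obtain ⟨u, rfl⟩ : ∃ u, z = u * a := ⟨z / a, (div_mul_cancel₀ z ha).symm⟩
  have hu : τ u = u := by
    rw [map_mul, mul_right_comm, mul_comm (τ a), mul_assoc, mul_assoc] at hza
    exact mul_right_cancel₀ (mul_ne_zero ha ((map_ne_zero τ).2 ha)) hza
  rw [polarForm_mul_self hu, mul_eq_zero, CharTwo.add_eq_zero] at hz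
  rcases hσ u (hz.resolve_right (hQ a ha)) with rfl | rfl <;> simp

lemma card_filter_quadForm_add_add_eq_le_two [Fintype F] [DecidableEq F] [CharP F 2] {c δ : F}
    (hker : ∀ a z, a ≠ 0 → polarForm σ τ c δ a z = 0 → z = 0 ∨ z = a) {a : F} (ha : a ≠ 0)
    (b : F) :
    (univ.filter fun x => quadForm σ τ c δ (x + a) + quadForm σ τ c δ x = b).card ≤ 2 := by
  refine card_filter_eq_le_two _ a (fun x y hxy => ?_) b
  have hxy : polarForm σ τ c δ a (x + y) = 0 := by
    rw [polarForm_add, ← quadForm_add_add, ← quadForm_add_add, hxy]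
    linear_combination (norm := (ring_nf; reduce_mod_char!))
  rcases hker a _ ha hxy with h | h
  · exact .inl (CharTwo.add_eq_zero.1 h).symm
  · exact .inr (by linear_combination (norm := (ring_nf; reduce_mod_char!)) h)

lemma quadForm_zero_eq_of_map_eq_mul (hτ : ∀ x, τ (τ x) = x) (hστ : ∀ x, τ (σ x) = σ (τ x))
    {ω β γ : F} (hω : τ ω = ω) (h1 : σ γ * γ + ω * (σ β * β) = 1) {t a : F} (ht : τ a = t * a) :
    quadForm σ τ (ω * σ β * τ β + σ γ * τ γ) 0 a = σ a * a
      * (σ (γ * t + τ γ) * (γ * t + τ γ) + ω * (σ (β * t + τ β) * (β * t + τ β))) := by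
  have h1' := congrArg τ h1
  simp only [map_add, map_mul, map_one, hστ, hω] at h1'
  simp only [quadForm, ht, map_add, map_mul, hτ, hστ, hω]
  linear_combination -(σ a * a) * (σ t * t * h1 + h1')

lemma quadForm_zero_ne_zero [CharP F 2] (hτ : ∀ x, τ (τ x) = x) (hστ : ∀ x, τ (σ x) = σ (τ x))
    {ω β γ : F} (hω : τ ω = ω) (h1 : σ γ * γ + ω * (σ β * β) = 1) (h2 : τ γ * β ≠ τ β * γ)
    (hroot : ∀ r, τ r = r → σ r * r ≠ ω) {a : F} (ha : a ≠ 0) :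
    quadForm σ τ (ω * σ β * τ β + σ γ * τ γ) 0 a ≠ 0 := by
  obtain ⟨t, hta⟩ : ∃ t, τ a = t * a := ⟨τ a / a, (div_mul_cancel₀ _ ha).symm⟩
  have htt : τ t * t = 1 := by
    have h := congrArg τ hta
    rw [hτ, map_mul, hta, ← mul_assoc] at h
    exact mul_right_cancel₀ ha (by rw [one_mul]; exact h.symm)
  rw [quadForm_zero_eq_of_map_eq_mul hτ hστ hω h1 hta]
  refine mul_ne_zero (mul_ne_zero ((map_ne_zero σ).2 ha) ha) fun hUV => ?_
  set U := γ * t + τ γ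
  set V := β * t + τ β
  have hτU : τ U = τ t * U := by simp only [U, map_add, map_mul, hτ]; linear_combination -γ * htt
  have hτV : τ V = τ t * V := by simp only [V, map_add, map_mul, hτ]; linear_combination -β * htt
  by_cases hV : V = 0
  · rw [hV, map_zero, zero_mul, mul_zero, add_zero, mul_eq_zero, map_eq_zero, or_self] at hUV
    apply h2
    simp only [U, V] at hUV hV
    linear_combination β * hUV - γ * hV
  · refine hroot (U / V) ?_ ?_
    · rw [map_div₀, hτU, hτV, mul_div_mul_left _ _ (left_ne_zero_of_mul_eq_one htt)]
    · rw [map_div₀, div_mul_div_comm, div_eq_iff (mul_ne_zero ((map_ne_zero σ).2 hV) hV)]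
      linear_combination (norm := (ring_nf; reduce_mod_char!)) hUV

end QuadForm

lemma apnFun_eq_quadForm {F : Type*} [Field F] [CharP F 2] {k s : ℕ} {ω : F}
    (hτ : ∀ x : F, iterateFrobenius F 2 k (iterateFrobenius F 2 k x) = x) (hω : ω ^ 2 ^ k = ω)
    (β γ δ : F) :
    apnFun k s ω β γ δ = quadForm (iterateFrobenius F 2 s) (iterateFrobenius F 2 k)
      (ω * β ^ 2 ^ s * β ^ 2 ^ k + γ ^ 2 ^ s * γ ^ 2 ^ k) δ := by
  ext x
  have hτ' : ∀ x : F, (x ^ 2 ^ k) ^ 2 ^ k = x := hτ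
  simp only [apnFun, quadForm, iterateFrobenius_def, map_add, map_mul, hω, hτ']
  simp only [pow_add, pow_mul, pow_one]
  ring

theorem stmt12_general (F : Type*) [Field F] [Fintype F] [DecidableEq F] (k s : ℕ)
    (hke : Even k) (hk3 : ¬ 3 ∣ k)
    (hcard : Fintype.card F = 2 ^ (2 * k)) (hgcd : Nat.gcd s (2 * k) = 1)
    (ω : F) (hω : orderOf ω = 3)
    (δ : F) (hδ : δ ^ 2 ^ k ≠ δ)
    (β γ : F) (hβ : β ≠ 0) (hγ : γ ≠ 0)
    (h1 : γ ^ (2 ^ s + 1) + ω * β ^ (2 ^ s + 1) + 1 = 0)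
    (h2 : γ ^ (2 ^ k - 1) ≠ β ^ (2 ^ k - 1)) :
    ∀ a b : F, a ≠ 0 →
      (Finset.univ.filter fun x : F =>
        apnFun k s ω β γ δ (x + a) + apnFun k s ω β γ δ x = b).card ≤ 2 := by
  have : CharP F 2 := charP_of_card_eq_prime_pow hcard
  have hτ := iterateFrobenius_iterateFrobenius_of_card hcard
  have hστ (x : F) : iterateFrobenius F 2 k (iterateFrobenius F 2 s x)
      = iterateFrobenius F 2 s (iterateFrobenius F 2 k x) := by
    rw [← iterateFrobenius_add_apply, ← iterateFrobenius_add_apply, add_comm]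
  have hωτ : ω ^ 2 ^ k = ω := by
    rw [← pow_mod_orderOf, hω, two_pow_mod_three_of_even hke, pow_one]
  have hσ (u : F) (hu : u ^ 2 ^ s = u) : u = 0 ∨ u = 1 :=
    IsIdempotentElem.iff_eq_zero_or_one.1
      ((sq u).symm.trans (pow_eq_self_of_pow_pow_eq_self hcard hgcd hu))
  have hs : Odd s := (Nat.Coprime.coprime_dvd_right (dvd_mul_right 2 k) hgcd).odd_of_right
  have hroot (r : F) : r ^ 2 ^ k = r → r ^ 2 ^ s * r ≠ ω :=
    pow_two_pow_mul_self_ne_of_orderOf_eq_three hke hk3 hs hω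
  have h1' : γ ^ 2 ^ s * γ + ω * (β ^ 2 ^ s * β) = 1 := by
    linear_combination (norm := (ring_nf; reduce_mod_char!)) h1
  have h2' := pow_mul_ne_mul_pow_of_pow_sub_one_ne (Nat.two_pow_pos k).ne' hγ hβ h2
  intro a b ha
  rw [apnFun_eq_quadForm hτ hωτ]
  exact card_filter_quadForm_add_add_eq_le_two (fun a z ha hz =>
    eq_zero_or_eq_of_polarForm_eq_zero hτ hστ hδ hσ
      (fun a ha => quadForm_zero_ne_zero hτ hστ hωτ h1' h2' hroot ha) ha hz) ha b

/-- Under the hypotheses of Theorem `newapn`, the function `F`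
is APN on `F_{2^{2k}}`: for every `a ≠ 0` and every `b`, the equation
`F(x+a) + F(x) = b` has at most 2 solutions. -/
theorem stmt12 (F : Type*) [Field F] [Fintype F] [DecidableEq F] (k s : ℕ) (hk : 0 < k)
    (hke : Even k) (hk3 : ¬ 3 ∣ k)
    (hcard : Fintype.card F = 2 ^ (2 * k)) (hgcd : Nat.gcd s (2 * k) = 1)
    (ω : F) (hω : orderOf ω = 3)
    (δ : F) (hδ : δ ^ 2 ^ k ≠ δ)
    (β γ : F) (hβ : β ≠ 0) (hγ : γ ≠ 0)
    (h1 : γ ^ (2 ^ s + 1) + ω * β ^ (2 ^ s + 1) + 1 = 0)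
    (h2 : γ ^ (2 ^ k - 1) ≠ β ^ (2 ^ k - 1)) :
    ∀ a b : F, a ≠ 0 →
      (Finset.univ.filter fun x : F =>
        apnFun k s ω β γ δ (x + a) + apnFun k s ω β γ δ x = b).card ≤ 2 :=
  stmt12_general F k s hke hk3 hcard hgcd ω hω δ hδ β γ hβ hγ h1 h2
end

section
/- Let k be even with 3 ∤ k, s with gcd(s,2k)=1, ω of order 3, δ ∉ F_{2^k}, and β, γ as in the APN construction (γ^{2^s+1} + ωβ^{2^s+1} + 1 = 0, γ^{2^k-1} ≠ β^{2^k-1}). For F(x) = x^{2^s+1} + x^{2^{k+s}+2^k} + c₁ x^{2^{k+s}+1} + c₂ x^{2^k+2^s} + δ x^{2^k+1} with c₁ = ωβ^{2^s+2^k} + γ^{2^s+2^k}, c₂ = ωβ^{2^{k+s}+1} + γ^{2^{k+s}+1}, every solution x of F(x) + F(x+a) + F(a) = 0 with a ≠ 0 satisfies x/a ∈ F_{2^k}. -/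
/-- Under the hypotheses of the APN construction, every solution
`x` of `F(x) + F(x+a) + F(a) = 0` with `a ≠ 0` satisfies `x/a ∈ F_{2^k}`
(i.e. `x/a` is fixed by `z ↦ z^{2^k}`). -/
theorem stmt13 (F : Type*) [Field F] [Fintype F] (k s : ℕ) (hk : 0 < k)
    (hke : Even k) (hk3 : ¬ 3 ∣ k)
    (hcard : Fintype.card F = 2 ^ (2 * k)) (hgcd : Nat.gcd s (2 * k) = 1)
    (ω : F) (hω : orderOf ω = 3)
    (δ : F) (hδ : δ ^ 2 ^ k ≠ δ)
    (β γ : F) (hβ : β ≠ 0) (hγ : γ ≠ 0)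
    (h1 : γ ^ (2 ^ s + 1) + ω * β ^ (2 ^ s + 1) + 1 = 0)
    (h2 : γ ^ (2 ^ k - 1) ≠ β ^ (2 ^ k - 1))
    (a x : F) (ha : a ≠ 0)
    (hx : apnFun k s ω β γ δ x + apnFun k s ω β γ δ (x + a)
            + apnFun k s ω β γ δ a = 0) :
    (x / a) ^ 2 ^ k = x / a := by
  -- characteristic 2
  haveI hp : Fact (Nat.Prime (ringChar F)) := ⟨CharP.char_is_prime F _⟩
  obtain ⟨n, hn1, hn⟩ := FiniteField.card F (ringChar F)
  have hr2 : ringChar F = 2 := by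
    have hdvd : ringChar F ∣ 2 ^ (2 * k) := by
      rw [← hcard, hn]
      exact dvd_pow_self _ n.pos.ne'
    have := hp.out.dvd_of_dvd_pow hdvd
    exact (Nat.prime_dvd_prime_iff_eq hp.out Nat.prime_two).mp this
  haveI : CharP F 2 := hr2 ▸ ringChar.charP F
  have htwo : (2 : F) = 0 := by
    exact_mod_cast (CharP.cast_eq_zero F 2)
  -- the Frobenius square is the identity
  have h2k : ∀ z : F, z ^ 2 ^ (2 * k) = z := fun z => by
    rw [← hcard]; exact FiniteField.pow_card z
  -- ω is fixed by the k-th Frobenius (k even)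
  have h3 : ω ^ 3 = 1 := by rw [← hω]; exact pow_orderOf_eq_one ω
  have hωq : ω ^ 2 ^ k = ω := by
    obtain ⟨m, hm⟩ := hke
    have h4 : ∀ m : ℕ, ω ^ 4 ^ m = ω := by
      intro m
      induction m with
      | zero => simp
      | succ n ih =>
        rw [pow_succ, pow_mul, ih, show (4 : ℕ) = 3 + 1 by rfl, pow_add, h3, one_mul, pow_one]
    have : (2 : ℕ) ^ k = 4 ^ m := by
      rw [hm, ← two_mul, pow_mul]
      norm_num
    rw [this, h4]
  -- exponent shifting lemmas
  have hshift : ∀ z : F, ∀ e : ℕ, z ^ 2 ^ (2 * k + e) = z ^ 2 ^ e := by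
    intro z e
    rw [pow_add, pow_mul, h2k]
  have hpp : ∀ (z : F) (i j : ℕ),
      (z ^ (2 ^ i + 2 ^ j)) ^ 2 ^ k = z ^ 2 ^ (i + k) * z ^ 2 ^ (j + k) := by
    intro z i j
    rw [pow_add, mul_pow, ← pow_mul, ← pow_mul, ← pow_add 2 i k, ← pow_add 2 j k]
  -- the key step : F(z)^(2^k) = F(z) + (δ^(2^k) + δ) z^(2^k+1)
  have hstep : ∀ z : F, (apnFun k s ω β γ δ z) ^ 2 ^ k
      = apnFun k s ω β γ δ z + (δ ^ 2 ^ k + δ) * z ^ (2 ^ k + 1) := by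
    intro z
    have e1 : (z ^ (2 ^ s + 1)) ^ 2 ^ k = z ^ (2 ^ (k + s) + 2 ^ k) := by
      have := hpp z s 0
      simpa [pow_add, Nat.add_comm s k] using this
    have e2 : (z ^ (2 ^ (k + s) + 2 ^ k)) ^ 2 ^ k = z ^ (2 ^ s + 1) := by
      have := hpp z (k + s) k
      rw [show k + s + k = 2 * k + s by ring, show k + k = 2 * k + 0 by ring,
        hshift, hshift, pow_zero, pow_one] at this
      rw [this, ← pow_succ]
    have e3 : (z ^ (2 ^ (k + s) + 1)) ^ 2 ^ k = z ^ (2 ^ k + 2 ^ s) := by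
      have := hpp z (k + s) 0
      rw [show k + s + k = 2 * k + s by ring, hshift, zero_add,
        show (2 : ℕ) ^ 0 = 1 by norm_num] at this
      rw [this, ← pow_add, Nat.add_comm]
    have e4 : (z ^ (2 ^ k + 2 ^ s)) ^ 2 ^ k = z ^ (2 ^ (k + s) + 1) := by
      have := hpp z k s
      rw [show k + k = 2 * k + 0 by ring, hshift, pow_zero, pow_one,
        Nat.add_comm s k] at this
      rw [this, ← pow_succ']
    have e5 : (z ^ (2 ^ k + 1)) ^ 2 ^ k = z ^ (2 ^ k + 1) := by
      have := hpp z k 0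
      rw [show k + k = 2 * k + 0 by ring, hshift, pow_zero, pow_one, zero_add] at this
      rw [this, ← pow_succ']
    have ec1 : (ω * β ^ (2 ^ s + 2 ^ k) + γ ^ (2 ^ s + 2 ^ k)) ^ 2 ^ k
        = ω * β ^ (2 ^ (k + s) + 1) + γ ^ (2 ^ (k + s) + 1) := by
      have hb : (β ^ (2 ^ s + 2 ^ k)) ^ 2 ^ k = β ^ (2 ^ (k + s) + 1) := by
        have := hpp β s k
        rw [show k + k = 2 * k + 0 by ring, hshift, pow_zero, pow_one,
          Nat.add_comm s k] at this
        rw [this, ← pow_succ]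
      have hg : (γ ^ (2 ^ s + 2 ^ k)) ^ 2 ^ k = γ ^ (2 ^ (k + s) + 1) := by
        have := hpp γ s k
        rw [show k + k = 2 * k + 0 by ring, hshift, pow_zero, pow_one,
          Nat.add_comm s k] at this
        rw [this, ← pow_succ]
      rw [add_pow_char_pow, mul_pow, hωq, hb, hg]
    have ec2 : (ω * β ^ (2 ^ (k + s) + 1) + γ ^ (2 ^ (k + s) + 1)) ^ 2 ^ k
        = ω * β ^ (2 ^ s + 2 ^ k) + γ ^ (2 ^ s + 2 ^ k) := by
      have hb : (β ^ (2 ^ (k + s) + 1)) ^ 2 ^ k = β ^ (2 ^ s + 2 ^ k) := by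
        have := hpp β (k + s) 0
        rw [show k + s + k = 2 * k + s by ring, hshift, zero_add,
          show (2 : ℕ) ^ 0 = 1 by norm_num] at this
        rw [this, ← pow_add]
      have hg : (γ ^ (2 ^ (k + s) + 1)) ^ 2 ^ k = γ ^ (2 ^ s + 2 ^ k) := by
        have := hpp γ (k + s) 0
        rw [show k + s + k = 2 * k + s by ring, hshift, zero_add,
          show (2 : ℕ) ^ 0 = 1 by norm_num] at this
        rw [this, ← pow_add]
      rw [add_pow_char_pow, mul_pow, hωq, hb, hg]
    simp only [apnFun]
    rw [add_pow_char_pow, add_pow_char_pow, add_pow_char_pow, add_pow_char_pow,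
      mul_pow, mul_pow, mul_pow, e1, e2, e3, e4, e5, ec1, ec2]
    linear_combination (-(δ * z ^ (2 ^ k + 1))) * htwo
  -- raise hx to the 2^k-th power
  have h4 : (apnFun k s ω β γ δ x) ^ 2 ^ k + (apnFun k s ω β γ δ (x + a)) ^ 2 ^ k
      + (apnFun k s ω β γ δ a) ^ 2 ^ k = 0 := by
    rw [← add_pow_char_pow, ← add_pow_char_pow, hx]
    simp
  rw [hstep, hstep, hstep] at h4
  have h5 : (δ ^ 2 ^ k + δ) * (x ^ (2 ^ k + 1) + (x + a) ^ (2 ^ k + 1) + a ^ (2 ^ k + 1)) = 0 := by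
    linear_combination h4 - hx
  have hδ' : δ ^ 2 ^ k + δ ≠ 0 := by
    intro h
    apply hδ
    linear_combination h - δ * htwo
  have h6 : x ^ (2 ^ k + 1) + (x + a) ^ (2 ^ k + 1) + a ^ (2 ^ k + 1) = 0 :=
    (mul_eq_zero.mp h5).resolve_left hδ'
  rw [pow_succ (x + a), add_pow_char_pow] at h6
  have hxa : x ^ 2 ^ k * a = a ^ 2 ^ k * x := by
    linear_combination h6 - (x ^ 2 ^ k * x + a ^ 2 ^ k * a + a ^ 2 ^ k * x) * htwo
  rw [div_pow, div_eq_div_iff (pow_ne_zero _ ha) ha]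
  linear_combination hxa
end

section
/- Let k be even with 3 ∤ k, s with gcd(s,2k)=1, ω of order 3, and β, γ ∈ F_{2^{2k}}^* with γ^{2^s+1} + ωβ^{2^s+1} + 1 = 0 and γ^{2^k-1} ≠ β^{2^k-1}. Then for every nonzero a ∈ F_{2^{2k}}, a^{2^s+1} + a^{2^{k+s}+2^k} + (ωβ^{2^s+2^k} + γ^{2^s+2^k}) a^{2^{k+s}+1} + (ωβ^{2^{k+s}+1} + γ^{2^{k+s}+1}) a^{2^k+2^s} ≠ 0. -/
private lemma pow4_mod3 (m : ℕ) : 4 ^ m % 3 = 1 := by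
  induction m with
  | zero => rfl
  | succ n ih => rw [pow_succ]; omega

private lemma pow64_mod9 (m : ℕ) : 64 ^ m % 9 = 1 := by
  induction m with
  | zero => rfl
  | succ n ih => rw [pow_succ]; omega

/-- Under the hypotheses of the APN construction, for every
nonzero `a`, the expression
`a^{2^s+1} + a^{2^{k+s}+2^k} + (ωβ^{2^s+2^k}+γ^{2^s+2^k})a^{2^{k+s}+1}
+ (ωβ^{2^{k+s}+1}+γ^{2^{k+s}+1})a^{2^k+2^s}` is nonzero. -/
theorem stmt14 (F : Type*) [Field F] [Fintype F] (k s : ℕ) (hk : 0 < k)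
    (hke : Even k) (hk3 : ¬ 3 ∣ k)
    (hcard : Fintype.card F = 2 ^ (2 * k)) (hgcd : Nat.gcd s (2 * k) = 1)
    (ω : F) (hω : orderOf ω = 3)
    (β γ : F) (hβ : β ≠ 0) (hγ : γ ≠ 0)
    (h1 : γ ^ (2 ^ s + 1) + ω * β ^ (2 ^ s + 1) + 1 = 0)
    (h2 : γ ^ (2 ^ k - 1) ≠ β ^ (2 ^ k - 1)) :
    ∀ a : F, a ≠ 0 →
      a ^ (2 ^ s + 1) + a ^ (2 ^ (k + s) + 2 ^ k)
        + (ω * β ^ (2 ^ s + 2 ^ k) + γ ^ (2 ^ s + 2 ^ k)) * a ^ (2 ^ (k + s) + 1)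
        + (ω * β ^ (2 ^ (k + s) + 1) + γ ^ (2 ^ (k + s) + 1)) * a ^ (2 ^ k + 2 ^ s)
        ≠ 0 := by
  haveI hfact : Fact (Nat.Prime 2) := ⟨Nat.prime_two⟩
  -- characteristic 2
  haveI hchar : CharP F 2 := by
    haveI : CharP F (ringChar F) := ringChar.charP F
    obtain ⟨n, hp, hc⟩ := FiniteField.card F (ringChar F)
    have hdvd : ringChar F ∣ 2 ^ (2 * k) := by
      rw [← hcard, hc]
      exact dvd_pow_self _ (by positivity)
    have := (Nat.prime_dvd_prime_iff_eq hp Nat.prime_two).mp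
      (hp.dvd_of_dvd_pow hdvd)
    rwa [this] at ‹CharP F (ringChar F)›
  have h2F : (2 : F) = 0 := by exact_mod_cast CharP.cast_eq_zero F 2
  -- basic facts about ω
  have hω3 : ω ^ 3 = 1 := by rw [← hω]; exact pow_orderOf_eq_one ω
  have hω1 : ω ≠ 1 := by
    intro h; rw [h, orderOf_one] at hω; exact (by norm_num : (1:ℕ) ≠ 3) hω
  have hω0 : ω ≠ 0 := by
    intro h
    rw [h] at hω3
    simp at hω3
  -- 2^k ≡ 1 mod 3 since k is even
  obtain ⟨m, hm⟩ := hke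
  have h2k4 : 2 ^ k = 4 ^ m := by
    rw [hm, show (4:ℕ) = 2 * 2 from rfl, mul_pow, ← pow_add]
  have h2kmod : 2 ^ k % 3 = 1 := by rw [h2k4]; exact pow4_mod3 m
  have hωk : ω ^ (2 ^ k) = ω := by
    obtain ⟨t, ht⟩ : ∃ t, 2 ^ k = 3 * t + 1 := ⟨2 ^ k / 3, by omega⟩
    rw [ht, pow_add, pow_mul, hω3, one_pow, pow_one, one_mul]
  -- rewrite hypothesis h1
  have h1' : γ ^ (2 ^ s + 1) + ω * β ^ (2 ^ s + 1) = 1 := by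
    linear_combination h1 - h2F
  -- Frobenius image of h1'
  have hfrob : (γ ^ (2 ^ k)) ^ (2 ^ s) * γ ^ (2 ^ k)
      + ω * ((β ^ (2 ^ k)) ^ (2 ^ s) * β ^ (2 ^ k)) = 1 := by
    have hh := congrArg (· ^ (2 ^ k)) h1'
    simp only [one_pow] at hh
    rw [add_pow_char_pow, mul_pow, hωk, ← pow_mul, ← pow_mul] at hh
    have hrw : ∀ x : F, x ^ ((2 ^ s + 1) * 2 ^ k) = (x ^ 2 ^ k) ^ 2 ^ s * x ^ 2 ^ k := by
      intro x; rw [mul_comm, pow_mul, pow_succ]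
    rw [hrw, hrw] at hh
    exact hh
  intro a ha h
  -- exponent rewriting lemmas
  have hexp1 : ∀ x : F, x ^ (2 ^ (k + s) + 2 ^ k) = (x ^ 2 ^ k) ^ 2 ^ s * x ^ 2 ^ k := by
    intro x; rw [pow_add x, pow_add 2 k s, pow_mul]
  have hexp2 : ∀ x : F, x ^ (2 ^ (k + s) + 1) = (x ^ 2 ^ k) ^ 2 ^ s * x := by
    intro x; rw [pow_add x, pow_add 2 k s, pow_mul, pow_one]
  have hexp3 : ∀ x : F, x ^ (2 ^ s + 2 ^ k) = x ^ 2 ^ s * x ^ 2 ^ k := fun x => pow_add x _ _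
  have hexp4 : ∀ x : F, x ^ (2 ^ k + 2 ^ s) = x ^ 2 ^ k * x ^ 2 ^ s := fun x => pow_add x _ _
  have hexp5 : ∀ x : F, x ^ (2 ^ s + 1) = x ^ 2 ^ s * x := by
    intro x; rw [pow_add, pow_one]
  rw [hexp5 a, hexp1 a, hexp3 β, hexp3 γ, hexp2 a, hexp2 β, hexp2 γ, hexp4 a] at h
  rw [hexp5 β, hexp5 γ] at h1'
  -- the key identity: the expression equals ω*P^(2^s+1) + Q^(2^s+1)
  have hPQexp : ∀ b : F, (b * a ^ 2 ^ k + b ^ 2 ^ k * a) ^ (2 ^ s + 1)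
      = (b ^ 2 ^ s * (a ^ 2 ^ k) ^ 2 ^ s + (b ^ 2 ^ k) ^ 2 ^ s * a ^ 2 ^ s)
        * (b * a ^ 2 ^ k + b ^ 2 ^ k * a) := by
    intro b
    rw [pow_succ, add_pow_char_pow, mul_pow, mul_pow]
  have key : ω * (β * a ^ 2 ^ k + β ^ 2 ^ k * a) ^ (2 ^ s + 1)
      + (γ * a ^ 2 ^ k + γ ^ 2 ^ k * a) ^ (2 ^ s + 1) = 0 := by
    rw [hPQexp β, hPQexp γ]
    linear_combination h + ((a ^ 2 ^ k) ^ 2 ^ s * a ^ 2 ^ k) * h1'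
      + (a ^ 2 ^ s * a) * hfrob
  obtain ⟨P, hPdef⟩ : ∃ x : F, x = β * a ^ 2 ^ k + β ^ 2 ^ k * a := ⟨_, rfl⟩
  obtain ⟨Q, hQdef⟩ : ∃ x : F, x = γ * a ^ 2 ^ k + γ ^ 2 ^ k * a := ⟨_, rfl⟩
  rw [← hPdef, ← hQdef] at key
  have hkey2 : ω * P ^ (2 ^ s + 1) = Q ^ (2 ^ s + 1) := by
    linear_combination key - Q ^ (2 ^ s + 1) * h2F
  -- if a linear form vanishes, a^(2^k-1) equals b^(2^k-1)
  have hroot : ∀ b : F, b ≠ 0 → b * a ^ 2 ^ k + b ^ 2 ^ k * a = 0 →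
      a ^ (2 ^ k - 1) = b ^ (2 ^ k - 1) := by
    intro b hb hz
    have h2k1 : 2 ^ k = (2 ^ k - 1) + 1 := by
      have : 1 ≤ 2 ^ k := Nat.one_le_two_pow
      omega
    have hz' : b * a ^ 2 ^ k = b ^ 2 ^ k * a := by
      linear_combination hz - (b ^ 2 ^ k * a) * h2F
    rw [h2k1, pow_succ, pow_succ] at hz'
    -- b * (a^(2^k-1) * a) = b^(2^k-1) * b * a
    have := mul_right_cancel₀ ha (by linear_combination hz' :
      b * a ^ (2 ^ k - 1) * a = b ^ (2 ^ k - 1) * b * a)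
    have := mul_left_cancel₀ hb (by linear_combination this :
      b * a ^ (2 ^ k - 1) = b * b ^ (2 ^ k - 1))
    exact this
  -- P ≠ 0 and Q ≠ 0
  have hene : 2 ^ s + 1 ≠ 0 := by positivity
  have hP0 : P ≠ 0 := by
    intro hP
    have hQz : Q ^ (2 ^ s + 1) = 0 := by rw [← hkey2, hP, zero_pow hene, mul_zero]
    have hQ : Q = 0 := pow_eq_zero_iff hene |>.mp hQz
    exact h2 ((hroot γ hγ (hQdef ▸ hQ)).symm.trans (hroot β hβ (hPdef ▸ hP)))
  have hQ0 : Q ≠ 0 := by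
    intro hQ
    rw [hQ, zero_pow hene] at hkey2
    rcases mul_eq_zero.mp hkey2 with h' | h'
    · exact hω0 h'
    · exact hP0 (pow_eq_zero_iff hene |>.mp h')
  -- ω = (Q/P)^(2^s+1)
  have hωeq : (Q / P) ^ (2 ^ s + 1) = ω := by
    rw [div_pow]
    rw [div_eq_iff (pow_ne_zero _ hP0)]
    linear_combination -hkey2
  -- s is odd, so 3 ∣ 2^s + 1
  have hsodd : s % 2 = 1 := by
    rcases Nat.even_or_odd s with he | ho
    · exfalso
      obtain ⟨j, hj⟩ := he
      have : 2 ∣ Nat.gcd s (2 * k) := Nat.dvd_gcd (by omega) ⟨k, rfl⟩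
      omega
    · obtain ⟨j, hj⟩ := ho
      omega
  have h3dvd : 2 ^ s % 3 = 2 := by
    obtain ⟨j, hj⟩ : ∃ j, s = 2 * j + 1 := ⟨s / 2, by omega⟩
    have hss : 2 ^ s = 4 ^ j * 2 := by
      rw [hj, pow_add, pow_mul, pow_one]; norm_num
    have h4 := pow4_mod3 j
    rw [hss, Nat.mul_mod, h4]
  obtain ⟨c, hc⟩ : ∃ c, 2 ^ s + 1 = 3 * c := by
    revert h3dvd
    generalize (2 : ℕ) ^ s = x
    intro h3
    exact ⟨(x + 1) / 3, by omega⟩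
  -- t with t^3 = ω has order 9
  set t : F := (Q / P) ^ c with htdef
  have ht3 : t ^ 3 = ω := by
    rw [htdef, ← pow_mul, mul_comm c 3, ← hc, hωeq]
  have ht9 : t ^ 9 = 1 := by
    rw [show (9:ℕ) = 3 * 3 from rfl, pow_mul, ht3, hω3]
  have htdvd : orderOf t ∣ 9 := orderOf_dvd_of_pow_eq_one ht9
  have ht3ne : t ^ 3 ≠ 1 := by rw [ht3]; exact hω1
  have htord : orderOf t = 9 := by
    have h19 : orderOf t = 1 ∨ orderOf t = 3 ∨ orderOf t = 9 := by
      have hle : orderOf t ≤ 9 := Nat.le_of_dvd (by norm_num) htdvd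
      interval_cases h : orderOf t <;> revert htdvd <;> decide
    rcases h19 with h' | h' | h'
    · exact absurd (by rw [orderOf_eq_one_iff.mp h', one_pow]) ht3ne
    · exact absurd (h' ▸ pow_orderOf_eq_one t) ht3ne
    · exact h'
  have ht0 : t ≠ 0 := by
    intro h0
    rw [h0, zero_pow (by norm_num : (3:ℕ) ≠ 0)] at ht3
    exact hω0 ht3.symm
  have h9card : (9 : ℕ) ∣ Fintype.card F - 1 := by
    rw [← htord]
    exact orderOf_dvd_of_pow_eq_one (FiniteField.pow_card_sub_one_eq_one t ht0)
  rw [hcard] at h9card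
  have h4k : (2 : ℕ) ^ (2 * k) = 4 ^ k := by
    rw [pow_mul]; norm_num
  rw [h4k] at h9card
  -- 9 ∣ 4^k - 1 forces 3 ∣ k
  have hmod : (4 : ℕ) ^ k ≡ 4 ^ (k % 3) [MOD 9] := by
    conv_lhs => rw [← Nat.div_add_mod k 3]
    rw [pow_add, pow_mul]
    calc ((4:ℕ) ^ 3) ^ (k / 3) * 4 ^ (k % 3)
        ≡ 1 ^ (k / 3) * 4 ^ (k % 3) [MOD 9] :=
          Nat.ModEq.mul_right _ (Nat.ModEq.pow _ (by decide))
      _ = 4 ^ (k % 3) := by rw [one_pow, one_mul]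
  have h4k1 : (4 : ℕ) ^ k % 9 = 1 := by
    have hge : 1 ≤ (4 : ℕ) ^ k := Nat.one_le_pow _ _ (by norm_num)
    obtain ⟨d, hd⟩ := h9card
    revert hge hd
    generalize (4 : ℕ) ^ k = x
    intro hge hd
    omega
  have hmodr : (4 : ℕ) ^ (k % 3) % 9 = 1 := by
    have hx := hmod.symm
    unfold Nat.ModEq at hx
    omega
  have hklt : k % 3 < 3 := Nat.mod_lt _ (by norm_num)
  interval_cases hr : k % 3
  · exact hk3 (Nat.dvd_of_mod_eq_zero hr)
  · norm_num at hmodr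
  · norm_num at hmodr
end
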